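/- arXiv:1308.3143 — 4 statements merged into one kernel-verified Lean document; each statement's English description precedes it below -/
import Mathlib

section
/- If K ∈ 𝔄_m^r (r ∈ (0,1), m ≥ 2 an integer), then the Hausdorff dimension of K equals s = log m / log(1/r), and moreover 0 < 𝓗^s(K) < ∞, where 𝓗^s denotes s-dimensional Hausdorff measure. -/
open MeasureTheory

open scoped Classical

/-- The symbolic space metric on `ℕ → Fin m`: `d(x,y) = r ^ (min {k | x k ≠ y k})`
for `x ≠ y`, and `d(x,x) = 0`. -/
noncomputable def symbDist (r : ℝ) {m : ℕ} (x y : ℕ → Fin m) : ℝ :=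
  if x = y then 0 else r ^ sInf {k : ℕ | x k ≠ y k}

/-- `K` (a subset of a metric space) is bilipschitz equivalent to the symbolic
space `Σ_m^r`. -/
def BilipWithSymb {X : Type*} [MetricSpace X] (K : Set X) (m : ℕ) (r : ℝ) : Prop :=
  ∃ f : K → (ℕ → Fin m), Function.Bijective f ∧ ∃ C : ℝ, 1 ≤ C ∧ ∀ x y : K,
    C⁻¹ * dist x y ≤ symbDist r (f x) (f y) ∧ symbDist r (f x) (f y) ≤ C * dist x y

/-- `K ⊆ X` and `K' ⊆ X'` are bilipschitz equivalent (as metric spaces with the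
induced metrics). -/
def BilipEquivSets {X Y : Type*} [MetricSpace X] [MetricSpace Y]
    (K : Set X) (K' : Set Y) : Prop :=
  ∃ f : K → K', Function.Bijective f ∧ ∃ C : ℝ, 1 ≤ C ∧ ∀ x y : K,
    C⁻¹ * dist x y ≤ dist (f x) (f y) ∧ dist (f x) (f y) ≤ C * dist x y

/-- Dust-like graph-directed sets with ratio `r` on a directed graph with `p`
vertices, where `a i j` is the number of edges from `i` to `j`:
nonempty compact sets `K i` with `K i = ⋃_j ⋃_{e : Fin (a i j)} S i j e '' (K j)`,
the union being pairwise disjoint, each `S i j e` a similitude of ratio `r`. -/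
structure GraphDirected (X : Type*) [MetricSpace X] (p : ℕ) (r : ℝ) where
  a : Fin p → Fin p → ℕ
  S : ∀ i j : Fin p, Fin (a i j) → X → X
  sim : ∀ i j e x y, dist (S i j e x) (S i j e y) = r * dist x y
  K : Fin p → Set X
  nonempty : ∀ i, (K i).Nonempty
  compact : ∀ i, IsCompact (K i)
  union : ∀ i, K i = ⋃ j, ⋃ e, S i j e '' K j
  disj : ∀ i : Fin p, ∀ j j' : Fin p, ∀ e : Fin (a i j), ∀ e' : Fin (a i j'),
    (⟨j, e⟩ : Σ j, Fin (a i j)) ≠ ⟨j', e'⟩ →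
    Disjoint (S i j e '' K j) (S i j' e' '' K j')

/-- The family has integer characteristic `m`: there is a positive vector `v`
with `A v = m v`, `A` being the adjacency matrix. -/
def GraphDirected.HasCharacteristic {X : Type*} [MetricSpace X] {p : ℕ} {r : ℝ}
    (G : GraphDirected X p r) (m : ℕ) : Prop :=
  ∃ v : Fin p → ℝ, (∀ i, 0 < v i) ∧ ∀ i, ∑ j, (G.a i j : ℝ) * v j = (m : ℝ) * v i

/-- `K` belongs to the class `𝔄_m^r`: `K = K_1` for some dust-like
graph-directed sets `{K_1, …, K_p}` with ratio `r` and integer characteristic `m`. -/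
def MemGDClass {X : Type*} [MetricSpace X] (K : Set X) (r : ℝ) (m : ℕ) : Prop :=
  ∃ (p : ℕ) (hp : 0 < p) (G : GraphDirected X p r),
    G.HasCharacteristic m ∧ K = G.K ⟨0, hp⟩


/-!
With `s = log m / log (1 / r)` we have `m * r ^ s = 1`, and the positive eigenvector `v` of the
adjacency matrix weights the vertices.

Upper bound: cover `K i` by its level-`n` pieces. The bound `∑ diam ^ s ≤ C * v i` passes from
level `n` to level `n + 1` because `A v = m v` and `m * r ^ s = 1`, while the diameters of the
pieces tend to `0`.

Lower bound: distinct first-level pieces of a `K i` are `δ`-apart (this is where dust-likeness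
enters), so a set `U` of diameter `ρ < δ` meets at most one of them, and pulling `U` back
through that similitude multiplies `ρ` by `1 / r`. Hence the level-`n` pieces meeting `U` carry
`v`-weight at most `max v * (m ^ n * (ρ / δ) ^ s + 1)`, whereas the level-`n` pieces of `K i`
carry total weight `m ^ n * v i`. Letting `n → ∞`, every finite cover of `K i` has
`∑ diam ^ s ≥ v i * δ ^ s / max v`; by compactness, finite open covers suffice.
-/

open Filter Function Topology Metric Bornology MeasureTheory
open scoped ENNReal NNReal

lemma mul_rpow_log_div_log_one_div_eq_one {a r : ℝ} (ha : 0 < a) (hr0 : 0 < r) (hr1 : r ≠ 1) :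
    a * r ^ (Real.log a / Real.log (1 / r)) = 1 := by
  have hlog : Real.log r ≠ 0 := Real.log_ne_zero_of_pos_of_ne_one hr0 hr1
  rw [Real.rpow_def_of_pos hr0, one_div, Real.log_inv, div_neg, mul_neg, mul_div_cancel₀ _ hlog,
    Real.exp_neg, Real.exp_log ha, mul_inv_cancel₀ ha.ne']

lemma eventually_forall_le_dist_of_pairwise_disjoint {X ι : Type*} [MetricSpace X] [Finite ι]
    {A : ι → Set X} (hA : ∀ i, IsCompact (A i)) (hdisj : Pairwise (Disjoint on A)) :
    ∀ᶠ δ in 𝓝 (0 : ℝ), ∀ i j, i ≠ j → ∀ x ∈ A i, ∀ y ∈ A j, δ ≤ dist x y := by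
  simp only [eventually_all]
  intro i j hij
  obtain ⟨ρ, hρ, hsep⟩ := exists_pos_forall_lt_edist (hA i) (hA j).isClosed (hdisj hij)
  filter_upwards [Iio_mem_nhds (NNReal.coe_pos.2 hρ)] with δ hδ x hx y hy
  have hρxy := hsep x hx y hy
  rw [edist_nndist, ENNReal.coe_lt_coe, ← NNReal.coe_lt_coe, coe_nndist] at hρxy
  exact (hδ.trans hρxy).le

lemma exists_pos_rpow_add_two_mul_lt {a : ℝ≥0∞} (ha : a ≠ ⊤) {d : ℝ} (hd : 0 < d) {ε : ℝ≥0∞}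
    (hε : ε ≠ 0) : ∃ η : ℝ≥0, 0 < η ∧ (a + 2 * η) ^ d < a ^ d + ε := by
  have hcont : Tendsto (fun η : ℝ≥0 => (a + 2 * η) ^ d) (𝓝 0) (𝓝 ((a + 2 * (0 : ℝ≥0)) ^ d)) :=
    (ENNReal.continuous_rpow_const.comp <| continuous_const.add <|
      (ENNReal.continuous_const_mul (by simp)).comp ENNReal.continuous_coe).tendsto 0
  simp only [ENNReal.coe_zero, mul_zero, add_zero] at hcont
  have hlt : a ^ d < a ^ d + ε := ENNReal.lt_add_right (ENNReal.rpow_ne_top_of_nonneg hd.le ha) hε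
  obtain ⟨η, hη, hpos⟩ :=
    ((hcont.mono_left nhdsWithin_le_nhds).eventually (gt_mem_nhds hlt)).and
      self_mem_nhdsWithin |>.exists (f := 𝓝[>] (0 : ℝ≥0))
  exact ⟨η, hpos, hη⟩

lemma Bornology.IsBounded.ediam_rpow_eq {X : Type*} [PseudoMetricSpace X] {A : Set X}
    (hA : IsBounded A) {d : ℝ} (hd : 0 ≤ d) : ediam A ^ d = ENNReal.ofReal (diam A ^ d) := by
  rw [← ENNReal.ofReal_rpow_of_nonneg diam_nonneg hd, diam, ENNReal.ofReal_toReal hA.ediam_ne_top]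

-- A countable cover is thickened by radii so small that `∑ diam ^ d` grows by at most `ε`,
-- and then a finite subcover is extracted.
theorem ofReal_le_hausdorffMeasure_of_isCompact {X : Type*} [MetricSpace X] [MeasurableSpace X]
    [BorelSpace X] {K : Set X} (hK : IsCompact K) {d : ℝ} (hd : 0 < d) {c : ℝ}
    (h : ∀ (F : Finset ℕ) (O : ℕ → Set X), (∀ n, IsOpen (O n)) → (∀ n, IsBounded (O n)) →
      K ⊆ ⋃ n ∈ F, O n → c ≤ ∑ n ∈ F, diam (O n) ^ d) :
    ENNReal.ofReal c ≤ μH[d] K := by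
  rw [Measure.hausdorffMeasure_apply]
  refine le_iSup₂_of_le 1 one_pos <| le_iInf fun t => le_iInf fun hcov => le_iInf fun hdiam => ?_
  set a : ℕ → ℝ≥0∞ := fun n => ⨆ _ : (t n).Nonempty, ediam (t n) ^ d
  refine ENNReal.le_of_forall_pos_le_add fun ε hε _ => ?_
  obtain ⟨ε', hε'pos, hε'sum⟩ :=
    ENNReal.exists_pos_sum_of_countable (ENNReal.coe_ne_zero.2 hε.ne') ℕ
  have hfin : ∀ n, ediam (t n) ≠ ⊤ := fun n => ((hdiam n).trans_lt ENNReal.one_lt_top).ne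
  choose η hηpos hη using fun n =>
    exists_pos_rpow_add_two_mul_lt (hfin n) hd (ENNReal.coe_ne_zero.2 (hε'pos n).ne')
  set O : ℕ → Set X := fun n => thickening (η n) (t n)
  have hOdiam : ∀ n, ediam (O n) ≤ ediam (t n) + 2 * η n := fun n => ediam_thickening_le _
  have hObdd : ∀ n, IsBounded (O n) := fun n => isBounded_iff_ediam_ne_top.2 <|
    ((hOdiam n).trans_lt (ENNReal.add_lt_top.2 ⟨(hfin n).lt_top, by simp [ENNReal.mul_lt_top]⟩)).ne
  have hOa : ∀ n, ediam (O n) ^ d ≤ a n + ε' n := by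
    intro n
    rcases (t n).eq_empty_or_nonempty with hempty | hne
    · simp [O, hempty, ENNReal.zero_rpow_of_pos hd]
    · simp only [a, iSup_pos hne]
      exact (ENNReal.rpow_le_rpow (hOdiam n) hd.le).trans (hη n).le
  obtain ⟨F, hF⟩ := hK.elim_finite_subcover O (fun n => isOpen_thickening)
    (hcov.trans <| Set.iUnion_mono fun n => self_subset_thickening (hηpos n) _)
  calc ENNReal.ofReal c ≤ ENNReal.ofReal (∑ n ∈ F, diam (O n) ^ d) :=
        ENNReal.ofReal_le_ofReal (h F O (fun n => isOpen_thickening) hObdd hF)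
    _ = ∑ n ∈ F, ediam (O n) ^ d := by
        rw [ENNReal.ofReal_sum_of_nonneg fun n _ => by positivity]
        exact Finset.sum_congr rfl fun n _ => ((hObdd n).ediam_rpow_eq hd.le).symm
    _ ≤ ∑ n ∈ F, (a n + ε' n) := Finset.sum_le_sum fun n _ => hOa n
    _ ≤ ∑' n, a n + ε := by
        rw [Finset.sum_add_distrib]
        exact add_le_add (ENNReal.sum_le_tsum F) ((ENNReal.sum_le_tsum F).trans hε'sum.le)

namespace GraphDirected

variable {X : Type*} [MetricSpace X] {p : ℕ} {r : ℝ} (G : GraphDirected X p r)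

abbrev Edge (i : Fin p) : Type := Σ j, Fin (G.a i j)

lemma sum_edge (i : Fin p) (f : Fin p → ℝ) :
    ∑ e : G.Edge i, f e.1 = ∑ j, (G.a i j : ℝ) * f j := by
  simp [Fintype.sum_sigma]

lemma image_S_subset_K (i j : Fin p) (e : Fin (G.a i j)) : G.S i j e '' G.K j ⊆ G.K i := by
  rw [G.union i]
  exact Set.subset_iUnion₂_of_subset j e le_rfl

lemma lipschitzWith_S (hr : 0 ≤ r) (i j : Fin p) (e : Fin (G.a i j)) :
    LipschitzWith r.toNNReal (G.S i j e) :=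
  LipschitzWith.of_dist_le_mul fun x y => by rw [G.sim, Real.coe_toNNReal r hr]

lemma diam_image_S_le (hr : 0 ≤ r) (i j : Fin p) (e : Fin (G.a i j)) {B : Set X}
    (hB : IsBounded B) : diam (G.S i j e '' B) ≤ r * diam B := by
  simpa [Real.coe_toNNReal r hr] using (G.lipschitzWith_S hr i j e).diam_image_le B hB

noncomputable def pieces : ℕ → Fin p → Multiset (Set X)
  | 0, i => {G.K i}
  | n + 1, i => Finset.univ.val.bind fun e : G.Edge i => (pieces n e.1).map (G.S i e.1 e.2 '' ·)

lemma K_subset_iUnion_pieces (n : ℕ) (i : Fin p) : G.K i ⊆ ⋃ A ∈ G.pieces n i, A := by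
  induction n generalizing i with
  | zero => simp [pieces]
  | succ n ih =>
    intro x hx
    rw [G.union i] at hx
    obtain ⟨j, e, y, hy, rfl⟩ : ∃ j e, ∃ y ∈ G.K j, G.S i j e y = x := by simpa using hx
    obtain ⟨A, hA, hyA⟩ := Set.mem_iUnion₂.1 (ih j hy)
    exact Set.mem_iUnion₂.2 ⟨_, Multiset.mem_bind.2 ⟨⟨j, e⟩, Finset.mem_univ _,
      Multiset.mem_map.2 ⟨A, hA, rfl⟩⟩, Set.mem_image_of_mem _ hyA⟩

def PiecesSeparated (δ : ℝ) : Prop :=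
  ∀ i (e e' : G.Edge i), e ≠ e' → ∀ x ∈ G.K e.1, ∀ y ∈ G.K e'.1,
    δ ≤ dist (G.S i e.1 e.2 x) (G.S i e'.1 e'.2 y)

lemma exists_piecesSeparated (hr : 0 ≤ r) : ∃ δ > 0, G.PiecesSeparated δ := by
  have hsep : ∀ i, ∀ᶠ δ in 𝓝 (0 : ℝ), ∀ e e' : G.Edge i, e ≠ e' →
      ∀ x ∈ G.S i e.1 e.2 '' G.K e.1, ∀ y ∈ G.S i e'.1 e'.2 '' G.K e'.1, δ ≤ dist x y :=
    fun i => eventually_forall_le_dist_of_pairwise_disjoint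
      (fun e => (G.compact _).image (G.lipschitzWith_S hr i e.1 e.2).continuous)
      (fun e e' hne => G.disj i e.1 e'.1 e.2 e'.2 hne)
  obtain ⟨δ, hδ, hδpos⟩ :=
    ((eventually_all.2 hsep).filter_mono nhdsWithin_le_nhds).and self_mem_nhdsWithin
      |>.exists (f := 𝓝[>] (0 : ℝ))
  exact ⟨δ, hδpos, fun i e e' hne x hx y hy =>
    hδ i e e' hne _ (Set.mem_image_of_mem _ hx) _ (Set.mem_image_of_mem _ hy)⟩

/-- `G.weight v n i U` is the total `v`-weight of the endpoints of those paths of length `n`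
from `i` whose pieces `S_{e₁} ∘ ⋯ ∘ S_{eₙ} (K_j)` meet `U`. -/
noncomputable def weight (v : Fin p → ℝ) : ℕ → Fin p → Set X → ℝ
  | 0, i, U => if (G.K i ∩ U).Nonempty then v i else 0
  | n + 1, i, U => ∑ e : G.Edge i, weight v n e.1 (G.S i e.1 e.2 ⁻¹' U)

variable {G} {v : Fin p → ℝ} {m : ℕ}

lemma sum_edge_pow_mul (hv : ∀ i, ∑ j, (G.a i j : ℝ) * v j = m * v i) (n : ℕ) (i : Fin p) :
    ∑ e : G.Edge i, (m : ℝ) ^ n * v e.1 = m ^ (n + 1) * v i := by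
  rw [G.sum_edge i fun j => (m : ℝ) ^ n * v j]
  simp_rw [mul_left_comm _ ((m : ℝ) ^ n)]
  rw [← Finset.mul_sum, hv, pow_succ, mul_assoc]

lemma exists_of_mem_pieces_succ {n : ℕ} {i : Fin p} {A : Set X} (hA : A ∈ G.pieces (n + 1) i) :
    ∃ e : G.Edge i, ∃ B ∈ G.pieces n e.1, A = G.S i e.1 e.2 '' B := by
  obtain ⟨e, -, hA⟩ := Multiset.mem_bind.1 hA
  obtain ⟨B, hB, rfl⟩ := Multiset.mem_map.1 hA
  exact ⟨e, B, hB, rfl⟩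

lemma isCompact_of_mem_pieces (hr : 0 ≤ r) {n : ℕ} {i : Fin p} {A : Set X}
    (hA : A ∈ G.pieces n i) : IsCompact A := by
  induction n generalizing i A with
  | zero => rw [Multiset.mem_singleton.1 hA]; exact G.compact i
  | succ n ih =>
    obtain ⟨e, B, hB, rfl⟩ := exists_of_mem_pieces_succ hA
    exact (ih hB).image (G.lipschitzWith_S hr i e.1 e.2).continuous

lemma diam_le_of_mem_pieces (hr : 0 ≤ r) {D : ℝ} (hD : ∀ j, diam (G.K j) ≤ D) {n : ℕ}
    {i : Fin p} {A : Set X} (hA : A ∈ G.pieces n i) : diam A ≤ r ^ n * D := by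
  induction n generalizing i A with
  | zero => rw [Multiset.mem_singleton.1 hA, pow_zero, one_mul]; exact hD i
  | succ n ih =>
    obtain ⟨e, B, hB, rfl⟩ := exists_of_mem_pieces_succ hA
    calc diam (G.S i e.1 e.2 '' B) ≤ r * diam B :=
          G.diam_image_S_le hr i e.1 e.2 (isCompact_of_mem_pieces hr hB).isBounded
      _ ≤ r ^ (n + 1) * D := by rw [pow_succ', mul_assoc]; gcongr; exact ih hB

lemma sum_diam_rpow_pieces_le (hv : ∀ i, ∑ j, (G.a i j : ℝ) * v j = m * v i) (hr : 0 ≤ r)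
    {s : ℝ} (hs : 0 ≤ s) (hrs : m * r ^ s = 1) {C : ℝ} (hC : ∀ j, diam (G.K j) ^ s ≤ C * v j)
    (n : ℕ) (i : Fin p) : ((G.pieces n i).map fun A => diam A ^ s).sum ≤ C * v i := by
  induction n generalizing i with
  | zero => simpa [pieces] using hC i
  | succ n ih =>
    calc ((G.pieces (n + 1) i).map fun A => diam A ^ s).sum
        = ∑ e : G.Edge i, ((G.pieces n e.1).map fun B => diam (G.S i e.1 e.2 '' B) ^ s).sum := by
          rw [pieces, Multiset.map_bind, Multiset.sum_bind, Finset.sum_eq_multiset_sum]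
          simp only [Multiset.map_map, Function.comp_def]
      _ ≤ ∑ e : G.Edge i, r ^ s * ((G.pieces n e.1).map fun B => diam B ^ s).sum := by
          refine Finset.sum_le_sum fun e _ => ?_
          rw [← Multiset.sum_map_mul_left]
          refine Multiset.sum_map_le_sum_map _ _ fun B hB => ?_
          rw [← Real.mul_rpow hr diam_nonneg]
          exact Real.rpow_le_rpow diam_nonneg
            (G.diam_image_S_le hr i e.1 e.2 (isCompact_of_mem_pieces hr hB).isBounded) hs
      _ ≤ ∑ e : G.Edge i, r ^ s * (C * v e.1) := by
          gcongr with e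
          exact ih e.1
      _ = r ^ s * C * ∑ j, (G.a i j : ℝ) * v j := by
          rw [G.sum_edge i fun j => r ^ s * (C * v j), Finset.mul_sum]
          exact Finset.sum_congr rfl fun j _ => by ring
      _ = C * v i := by rw [hv]; linear_combination C * v i * hrs

lemma sum_ediam_rpow_pieces_le (hv : ∀ i, ∑ j, (G.a i j : ℝ) * v j = m * v i) (hr : 0 ≤ r)
    {s : ℝ} (hs : 0 ≤ s) (hrs : m * r ^ s = 1) {C : ℝ} (hC : ∀ j, diam (G.K j) ^ s ≤ C * v j)
    (n : ℕ) (i : Fin p) :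
    ∑ A : G.pieces n i, ediam (A : Set X) ^ s ≤ ENNReal.ofReal (C * v i) := by
  calc ∑ A : G.pieces n i, ediam (A : Set X) ^ s
      = ENNReal.ofReal (∑ A : G.pieces n i, diam (A : Set X) ^ s) := by
        rw [ENNReal.ofReal_sum_of_nonneg fun A _ => by positivity]
        exact Finset.sum_congr rfl fun A _ =>
          (isCompact_of_mem_pieces hr Multiset.coe_mem).isBounded.ediam_rpow_eq hs
    _ = ENNReal.ofReal ((G.pieces n i).map fun A => diam A ^ s).sum := by
        rw [Finset.sum_eq_multiset_sum]
        exact congrArg _ (congrArg _ (Multiset.map_univ _ fun A => diam A ^ s))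
    _ ≤ ENNReal.ofReal (C * v i) :=
        ENNReal.ofReal_le_ofReal (sum_diam_rpow_pieces_le hv hr hs hrs hC n i)

theorem hausdorffMeasure_K_lt_top [MeasurableSpace X] [BorelSpace X] (hv0 : ∀ i, 0 < v i)
    (hv : ∀ i, ∑ j, (G.a i j : ℝ) * v j = m * v i) (hr0 : 0 ≤ r) (hr1 : r < 1) {s : ℝ}
    (hs : 0 ≤ s) (hrs : m * r ^ s = 1) (i : Fin p) : μH[s] (G.K i) < ⊤ := by
  set D := ∑ j, diam (G.K j)
  set C := ∑ j, diam (G.K j) ^ s / v j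
  have hD : ∀ j, diam (G.K j) ≤ D := fun j =>
    Finset.single_le_sum (fun k _ => diam_nonneg) (Finset.mem_univ j)
  have hC : ∀ j, diam (G.K j) ^ s ≤ C * v j := fun j => by
    rw [← div_le_iff₀ (hv0 j)]
    exact Finset.single_le_sum (fun k _ => div_nonneg (Real.rpow_nonneg diam_nonneg s) (hv0 k).le)
      (Finset.mem_univ j)
  have hR : Tendsto (fun n : ℕ => ENNReal.ofReal (r ^ n * D)) atTop (𝓝 0) := by
    simpa using ENNReal.tendsto_ofReal
      ((tendsto_pow_atTop_nhds_zero_of_lt_one hr0 hr1).mul_const D)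
  have hdiam : ∀ n (A : G.pieces n i), ediam (A : Set X) ≤ ENNReal.ofReal (r ^ n * D) :=
    fun n A => by
      rw [← ENNReal.ofReal_toReal
        (isCompact_of_mem_pieces hr0 Multiset.coe_mem).isBounded.ediam_ne_top]
      exact ENNReal.ofReal_le_ofReal (diam_le_of_mem_pieces hr0 hD Multiset.coe_mem)
  have hcover : ∀ n, G.K i ⊆ ⋃ A : G.pieces n i, (A : Set X) := fun n x hx => by
    obtain ⟨A, hA, hxA⟩ := Set.mem_iUnion₂.1 (G.K_subset_iUnion_pieces n i hx)
    exact Set.mem_iUnion.2 ⟨(G.pieces n i).mkToType A ⟨0, Multiset.count_pos.2 hA⟩, hxA⟩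
  calc μH[s] (G.K i) ≤ liminf (fun n => ∑ A : G.pieces n i, ediam (A : Set X) ^ s) atTop :=
        Measure.hausdorffMeasure_le_liminf_sum s (G.K i) _ hR (fun n (A : G.pieces n i) => A)
          (Eventually.of_forall hdiam) (Eventually.of_forall hcover)
    _ ≤ ENNReal.ofReal (C * v i) := liminf_le_of_frequently_le' <| Frequently.of_forall
        fun n => sum_ediam_rpow_pieces_le hv hr0 hs hrs hC n i
    _ < ⊤ := ENNReal.ofReal_lt_top

lemma weight_nonneg (hv0 : ∀ i, 0 ≤ v i) (n : ℕ) (i : Fin p) (U : Set X) :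
    0 ≤ G.weight v n i U := by
  induction n generalizing i U with
  | zero => unfold weight; split_ifs <;> simp [hv0]
  | succ n ih => exact Finset.sum_nonneg fun e _ => ih _ _

lemma inter_nonempty_of_weight_ne_zero {n : ℕ} {i : Fin p} {U : Set X}
    (h : G.weight v n i U ≠ 0) : (G.K i ∩ U).Nonempty := by
  induction n generalizing i U with
  | zero => unfold weight at h; split_ifs at h with hne; exacts [hne, absurd rfl h]
  | succ n ih =>
    obtain ⟨e, -, he⟩ := Finset.exists_ne_zero_of_sum_ne_zero h
    obtain ⟨x, hxK, hxU⟩ := ih he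
    exact ⟨_, G.image_S_subset_K i e.1 e.2 (Set.mem_image_of_mem _ hxK), hxU⟩

lemma weight_le_pow_mul (hv0 : ∀ i, 0 ≤ v i) (hv : ∀ i, ∑ j, (G.a i j : ℝ) * v j = m * v i)
    (n : ℕ) (i : Fin p) (U : Set X) : G.weight v n i U ≤ m ^ n * v i := by
  induction n generalizing i U with
  | zero => unfold weight; split_ifs <;> simp [hv0]
  | succ n ih =>
    calc G.weight v (n + 1) i U ≤ ∑ e : G.Edge i, (m : ℝ) ^ n * v e.1 :=
          Finset.sum_le_sum fun e _ => ih _ _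
      _ = m ^ (n + 1) * v i := sum_edge_pow_mul hv n i

lemma pow_mul_le_sum_weight (hv0 : ∀ i, 0 ≤ v i)
    (hv : ∀ i, ∑ j, (G.a i j : ℝ) * v j = m * v i) {ι : Type*} {F : Finset ι} {O : ι → Set X}
    {i : Fin p} (hcov : G.K i ⊆ ⋃ k ∈ F, O k) (n : ℕ) :
    m ^ n * v i ≤ ∑ k ∈ F, G.weight v n i (O k) := by
  induction n generalizing i O with
  | zero =>
    obtain ⟨x, hx⟩ := G.nonempty i
    obtain ⟨k, hk, hxk⟩ := Set.mem_iUnion₂.1 (hcov hx)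
    calc (m : ℝ) ^ 0 * v i = G.weight v 0 i (O k) := by
          rw [weight, if_pos ⟨x, hx, hxk⟩, pow_zero, one_mul]
      _ ≤ ∑ k ∈ F, G.weight v 0 i (O k) :=
          Finset.single_le_sum (fun k _ => weight_nonneg hv0 0 i (O k)) hk
  | succ n ih =>
    have hcov' : ∀ e : G.Edge i, G.K e.1 ⊆ ⋃ k ∈ F, G.S i e.1 e.2 ⁻¹' O k := fun e x hx => by
      simpa using hcov (G.image_S_subset_K i e.1 e.2 (Set.mem_image_of_mem _ hx))
    calc (m : ℝ) ^ (n + 1) * v i = ∑ e : G.Edge i, (m : ℝ) ^ n * v e.1 :=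
          (sum_edge_pow_mul hv n i).symm
      _ ≤ ∑ e : G.Edge i, ∑ k ∈ F, G.weight v n e.1 (G.S i e.1 e.2 ⁻¹' O k) :=
          Finset.sum_le_sum fun e _ => ih (hcov' e)
      _ = ∑ k ∈ F, G.weight v (n + 1) i (O k) := Finset.sum_comm

-- `U` meets at most one first-level piece of `K i`, so at most one term of the sum is nonzero.
lemma weight_succ_le_of_forall_dist_lt {δ : ℝ} (hsep : G.PiecesSeparated δ) {n : ℕ} {i : Fin p}
    {U : Set X} (hU : ∀ x ∈ U, ∀ y ∈ U, dist x y < δ) {B : ℝ} (hB0 : 0 ≤ B)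
    (hB : ∀ e : G.Edge i, G.weight v n e.1 (G.S i e.1 e.2 ⁻¹' U) ≤ B) :
    G.weight v (n + 1) i U ≤ B := by
  by_cases hzero : ∀ e : G.Edge i, G.weight v n e.1 (G.S i e.1 e.2 ⁻¹' U) = 0
  · rw [weight, Finset.sum_eq_zero fun e _ => hzero e]
    exact hB0
  obtain ⟨e₀, he₀⟩ := not_forall.1 hzero
  have hunique : ∀ e, G.weight v n e.1 (G.S i e.1 e.2 ⁻¹' U) ≠ 0 → e = e₀ := by
    intro e he
    by_contra hne
    obtain ⟨x, hxK, hxU⟩ := inter_nonempty_of_weight_ne_zero he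
    obtain ⟨y, hyK, hyU⟩ := inter_nonempty_of_weight_ne_zero he₀
    linarith [hsep i e e₀ hne x hxK y hyK, hU _ hxU _ hyU]
  rw [weight, Fintype.sum_eq_single e₀ fun e he => not_not.1 fun h => he (hunique e h)]
  exact hB e₀

lemma weight_le_of_forall_dist_le (hv0 : ∀ i, 0 ≤ v i)
    (hv : ∀ i, ∑ j, (G.a i j : ℝ) * v j = m * v i) {Vmax : ℝ} (hVmax : ∀ j, v j ≤ Vmax)
    (hr : 0 < r) {s : ℝ} (hs : 0 ≤ s) (hrs : m * r ^ s = 1) {δ : ℝ} (hδ : 0 < δ)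
    (hsep : G.PiecesSeparated δ) (n : ℕ) (i : Fin p) {U : Set X} {ρ : ℝ} (hρ : 0 ≤ ρ)
    (hU : ∀ x ∈ U, ∀ y ∈ U, dist x y ≤ ρ) :
    G.weight v n i U ≤ Vmax * (m ^ n * (ρ / δ) ^ s + 1) := by
  have hVmax0 : 0 ≤ Vmax := (hv0 i).trans (hVmax i)
  induction n generalizing i U ρ with
  | zero =>
    calc G.weight v 0 i U ≤ Vmax :=
          (weight_le_pow_mul hv0 hv 0 i U).trans (by simpa using hVmax i)
      _ ≤ Vmax * (m ^ 0 * (ρ / δ) ^ s + 1) :=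
          le_mul_of_one_le_right hVmax0 (le_add_of_nonneg_left (by positivity))
  | succ n ih =>
    by_cases hρδ : δ ≤ ρ
    · have hone : 1 ≤ (ρ / δ) ^ s := Real.one_le_rpow ((one_le_div hδ).2 hρδ) hs
      calc G.weight v (n + 1) i U ≤ m ^ (n + 1) * v i := weight_le_pow_mul hv0 hv _ i U
        _ ≤ m ^ (n + 1) * (Vmax * (ρ / δ) ^ s) := by
            gcongr
            simpa using mul_le_mul (hVmax i) hone zero_le_one hVmax0
        _ ≤ Vmax * (m ^ (n + 1) * (ρ / δ) ^ s + 1) := by linarith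
    refine weight_succ_le_of_forall_dist_lt hsep
      (fun x hx y hy => (hU x hx y hy).trans_lt (not_le.1 hρδ)) (by positivity) fun e => ?_
    have hpre : ∀ x ∈ G.S i e.1 e.2 ⁻¹' U, ∀ y ∈ G.S i e.1 e.2 ⁻¹' U, dist x y ≤ ρ / r :=
      fun x hx y hy => by rw [le_div_iff₀ hr, mul_comm, ← G.sim]; exact hU _ hx _ hy
    have hscale : (ρ / r / δ) ^ s = m * (ρ / δ) ^ s := by
      rw [div_right_comm, Real.div_rpow (by positivity) hr.le,
        div_eq_iff (Real.rpow_pos_of_pos hr s).ne']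
      linear_combination -(ρ / δ) ^ s * hrs
    calc G.weight v n e.1 (G.S i e.1 e.2 ⁻¹' U) ≤ Vmax * (m ^ n * (ρ / r / δ) ^ s + 1) :=
          ih e.1 (by positivity) hpre
      _ = Vmax * (m ^ (n + 1) * (ρ / δ) ^ s + 1) := by rw [hscale]; ring

lemma mul_rpow_le_sum_diam_rpow (hv0 : ∀ i, 0 ≤ v i)
    (hv : ∀ i, ∑ j, (G.a i j : ℝ) * v j = m * v i) (hm : 1 < m) {Vmax : ℝ}
    (hVmax : ∀ j, v j ≤ Vmax) (hr : 0 < r) {s : ℝ} (hs : 0 ≤ s) (hrs : m * r ^ s = 1)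
    {δ : ℝ} (hδ : 0 < δ) (hsep : G.PiecesSeparated δ) {ι : Type*} {F : Finset ι}
    {O : ι → Set X} (hbdd : ∀ k, IsBounded (O k)) {i : Fin p} (hcov : G.K i ⊆ ⋃ k ∈ F, O k) :
    v i * δ ^ s ≤ Vmax * ∑ k ∈ F, diam (O k) ^ s := by
  set A := Vmax * ∑ k ∈ F, (diam (O k) / δ) ^ s
  set C := Vmax * F.card
  have hm0 : (0 : ℝ) < m := by exact_mod_cast zero_lt_one.trans hm
  have hbound : ∀ n : ℕ, v i ≤ A + C * ((m : ℝ)⁻¹) ^ n := by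
    intro n
    have h : m ^ n * v i ≤ m ^ n * A + C := by
      calc (m : ℝ) ^ n * v i ≤ ∑ k ∈ F, G.weight v n i (O k) :=
            pow_mul_le_sum_weight hv0 hv hcov n
        _ ≤ ∑ k ∈ F, Vmax * (m ^ n * (diam (O k) / δ) ^ s + 1) :=
            Finset.sum_le_sum fun k _ => weight_le_of_forall_dist_le hv0 hv hVmax hr hs hrs hδ
              hsep n i diam_nonneg fun x hx y hy => dist_le_diam_of_mem (hbdd k) hx hy
        _ = m ^ n * A + C := by
            simp only [A, C, mul_add, Finset.sum_add_distrib, ← Finset.mul_sum,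
              Finset.sum_const, nsmul_eq_mul]
            ring
    rw [inv_pow, ← div_eq_mul_inv, ← sub_le_iff_le_add', le_div_iff₀ (by positivity)]
    linarith
  have hlim : Tendsto (fun n : ℕ => A + C * ((m : ℝ)⁻¹) ^ n) atTop (𝓝 (A + C * 0)) :=
    (tendsto_pow_atTop_nhds_zero_of_lt_one (by positivity)
      (inv_lt_one_of_one_lt₀ (by exact_mod_cast hm))).const_mul C |>.const_add A
  have hvA : v i ≤ A := by simpa using ge_of_tendsto' hlim hbound
  rw [← le_div_iff₀ (Real.rpow_pos_of_pos hδ s), mul_div_assoc, Finset.sum_div]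
  simpa only [A, Real.div_rpow diam_nonneg hδ.le] using hvA

theorem hausdorffMeasure_K_pos [MeasurableSpace X] [BorelSpace X] (hv0 : ∀ i, 0 < v i)
    (hv : ∀ i, ∑ j, (G.a i j : ℝ) * v j = m * v i) (hm : 1 < m) (hr : 0 < r) {s : ℝ}
    (hs : 0 < s) (hrs : m * r ^ s = 1) (i : Fin p) : 0 < μH[s] (G.K i) := by
  obtain ⟨δ, hδ, hsep⟩ := G.exists_piecesSeparated hr.le
  set Vmax := ∑ k, v k
  have hVmax : ∀ j, v j ≤ Vmax := fun j =>
    Finset.single_le_sum (fun k _ => (hv0 k).le) (Finset.mem_univ j)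
  have hVmax0 : 0 < Vmax := (hv0 i).trans_le (hVmax i)
  have hlow : ENNReal.ofReal (v i * δ ^ s / Vmax) ≤ μH[s] (G.K i) :=
    ofReal_le_hausdorffMeasure_of_isCompact (G.compact i) hs fun F O _ hbdd hcov => by
      rw [div_le_iff₀' hVmax0]
      exact mul_rpow_le_sum_diam_rpow (fun j => (hv0 j).le) hv hm hVmax hr hs.le hrs hδ hsep
        hbdd hcov
  exact (ENNReal.ofReal_pos.2 <|
    div_pos (mul_pos (hv0 i) (Real.rpow_pos_of_pos hδ s)) hVmax0).trans_le hlow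

end GraphDirected

theorem gdClass_dimH_and_measure_general
    {X : Type*} [MetricSpace X] [MeasurableSpace X] [BorelSpace X]
    {r : ℝ} (hr : r ∈ Set.Ioo (0 : ℝ) 1) {m : ℕ} (hm : 2 ≤ m)
    {K : Set X} (hK : MemGDClass K r m)
    (s : ℝ) (hs : s = Real.log m / Real.log (1 / r)) :
    dimH K = ENNReal.ofReal s ∧ 0 < μH[s] K ∧ μH[s] K < ⊤ := by
  obtain ⟨p, hp, G, ⟨v, hv0, hv⟩, rfl⟩ := hK
  obtain ⟨hr0, hr1⟩ := hr
  have hm1 : (1 : ℝ) < m := by exact_mod_cast hm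
  have hs0 : 0 < s := hs ▸ div_pos (Real.log_pos hm1) (Real.log_pos (one_lt_one_div hr0 hr1))
  have hrs : m * r ^ s = 1 := hs ▸ mul_rpow_log_div_log_one_div_eq_one (by positivity) hr0 hr1.ne
  have hpos := G.hausdorffMeasure_K_pos hv0 hv hm hr0 hs0 hrs ⟨0, hp⟩
  have hfin := G.hausdorffMeasure_K_lt_top hv0 hv hr0.le hr1 hs0.le hrs ⟨0, hp⟩
  refine ⟨?_, hpos, hfin⟩
  rw [← Real.coe_toNNReal s hs0.le] at hpos hfin
  exact dimH_of_hausdorffMeasure_ne_zero_ne_top hpos.ne' hfin.ne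

/-- If `K ∈ 𝔄_m^r` (`r ∈ (0,1)`, `m ≥ 2` an integer), then the Hausdorff
dimension of `K` equals `s = log m / log (1/r)`, and `0 < 𝓗^s(K) < ∞`. -/
theorem gdClass_dimH_and_measure
    {X : Type*} [MetricSpace X] [CompactSpace X] [MeasurableSpace X] [BorelSpace X]
    {r : ℝ} (hr : r ∈ Set.Ioo (0 : ℝ) 1) {m : ℕ} (hm : 2 ≤ m)
    {K : Set X} (hK : MemGDClass K r m)
    (s : ℝ) (hs : s = Real.log m / Real.log (1 / r)) :
    dimH K = ENNReal.ofReal s ∧ 0 < μH[s] K ∧ μH[s] K < ⊤ :=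
  gdClass_dimH_and_measure_general hr hm hK s hs
end

section
/- Let D be an irreducible nonnegative s×s real matrix, let m > 0, and let v ∈ ℝ^s be a vector with all entries positive such that D v ≤ m v componentwise and D v ≠ m v. Then there exists k* ∈ ℕ such that for every k ≥ k* and every index i, one has (D^k v)_i < m^k. (In particular, the Perron–Frobenius eigenvalue of D is strictly less than m.) -/
private lemma pow_entry_nonneg' {s : ℕ} (D : Matrix (Fin s) (Fin s) ℝ)
    (h : ∀ i j, 0 ≤ D i j) (k : ℕ) : ∀ i j, 0 ≤ (D ^ k) i j := by
  induction k with
  | zero =>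
    intro i j
    simp [Matrix.one_apply]
    split <;> norm_num
  | succ n ih =>
    intro i j
    rw [pow_succ, Matrix.mul_apply]
    exact Finset.sum_nonneg fun l _ => mul_nonneg (ih i l) (h l j)

private lemma mulVec_mono' {s : ℕ} (D : Matrix (Fin s) (Fin s) ℝ)
    (h : ∀ i j, 0 ≤ D i j) {x y : Fin s → ℝ} (hxy : ∀ i, x i ≤ y i) :
    ∀ i, D.mulVec x i ≤ D.mulVec y i := by
  intro i
  simp only [Matrix.mulVec, dotProduct]
  exact Finset.sum_le_sum fun j _ => mul_le_mul_of_nonneg_left (hxy j) (h i j)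

private lemma mulVec_nonneg' {s : ℕ} (D : Matrix (Fin s) (Fin s) ℝ)
    (h : ∀ i j, 0 ≤ D i j) {x : Fin s → ℝ} (hx : ∀ i, 0 ≤ x i) :
    ∀ i, 0 ≤ D.mulVec x i := by
  intro i
  simp only [Matrix.mulVec, dotProduct]
  exact Finset.sum_nonneg fun j _ => mul_nonneg (h i j) (hx j)

/-- iterated subinvariance: `D^k v ≤ m^k v` componentwise. -/
private lemma pow_mulVec_le' {s : ℕ} (D : Matrix (Fin s) (Fin s) ℝ)
    (hpos : ∀ i j, 0 ≤ D i j) (m : ℝ) (hm : 0 < m)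
    (v : Fin s → ℝ) (hle : ∀ i, D.mulVec v i ≤ m * v i) (k : ℕ) :
    ∀ i, (D ^ k).mulVec v i ≤ m ^ k * v i := by
  induction k with
  | zero => intro i; simp
  | succ n ih =>
    intro i
    have h1 : (D ^ (n + 1)).mulVec v i = D.mulVec ((D ^ n).mulVec v) i := by
      rw [pow_succ', ← Matrix.mulVec_mulVec]
    rw [h1]
    have h2 : D.mulVec ((D ^ n).mulVec v) i ≤ D.mulVec (m ^ n • v) i :=
      mulVec_mono' D hpos (fun j => by simpa using ih j) i
    have h3 : D.mulVec (m ^ n • v) i = m ^ n * D.mulVec v i := by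
      rw [Matrix.mulVec_smul]; rfl
    calc D.mulVec ((D ^ n).mulVec v) i ≤ m ^ n * D.mulVec v i := by rw [← h3]; exact h2
      _ ≤ m ^ n * (m * v i) :=
        mul_le_mul_of_nonneg_left (hle i) (le_of_lt (pow_pos hm n))
      _ = m ^ (n + 1) * v i := by ring

/-- one-step identity with the deficiency vector `d = m v - D v`. -/
private lemma step_identity' {s : ℕ} (D : Matrix (Fin s) (Fin s) ℝ)
    (m : ℝ) (v : Fin s → ℝ) (N : ℕ) (i : Fin s) :
    m * (m ^ N * v i - (D ^ N).mulVec v i)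
      + (D ^ N).mulVec (fun j => m * v j - D.mulVec v j) i
      = m ^ (N + 1) * v i - (D ^ (N + 1)).mulVec v i := by
  have hd : (fun j => m * v j - D.mulVec v j) = m • v - D.mulVec v := by
    funext j; simp [Pi.smul_apply, smul_eq_mul]
  rw [hd, Matrix.mulVec_sub, Matrix.mulVec_smul, Matrix.mulVec_mulVec, ← pow_succ]
  simp only [Pi.sub_apply, Pi.smul_apply, smul_eq_mul]
  ring

/-- telescoping estimate. -/
private lemma telescope' {s : ℕ} (D : Matrix (Fin s) (Fin s) ℝ)
    (hpos : ∀ i j, 0 ≤ D i j) (m : ℝ) (hm : 0 < m)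
    (v : Fin s → ℝ) (hle : ∀ i, D.mulVec v i ≤ m * v i) :
    ∀ N t, t ≤ N → ∀ i,
      m ^ (N - t) * (D ^ t).mulVec (fun j => m * v j - D.mulVec v j) i
        ≤ m ^ (N + 1) * v i - (D ^ (N + 1)).mulVec v i := by
  intro N
  induction N with
  | zero =>
    intro t ht i
    interval_cases t
    simp
  | succ N ih =>
    intro t ht i
    have hdnn : ∀ n j, 0 ≤ (D ^ n).mulVec (fun j => m * v j - D.mulVec v j) j := by
      intro n j
      exact mulVec_nonneg' (D ^ n) (pow_entry_nonneg' D hpos n)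
        (fun l => sub_nonneg.2 (hle l)) j
    rcases Nat.lt_or_ge t (N + 1) with h | h
    · have ht' : t ≤ N := Nat.lt_succ_iff.mp h
      have key := ih t ht' i
      have hstep := step_identity' D m v (N + 1) i
      have hNle : m * (m ^ (N + 1) * v i - (D ^ (N + 1)).mulVec v i)
          ≤ m ^ (N + 2) * v i - (D ^ (N + 2)).mulVec v i := by
        rw [← hstep]
        linarith [hdnn (N + 1) i]
      have hexp : N + 1 - t = (N - t) + 1 := by omega
      rw [hexp, pow_succ]
      calc m ^ (N - t) * m
            * (D ^ t).mulVec (fun j => m * v j - D.mulVec v j) i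
          = m * (m ^ (N - t) * (D ^ t).mulVec (fun j => m * v j - D.mulVec v j) i) := by
            ring
        _ ≤ m * (m ^ (N + 1) * v i - (D ^ (N + 1)).mulVec v i) :=
            mul_le_mul_of_nonneg_left key (le_of_lt hm)
        _ ≤ m ^ (N + 2) * v i - (D ^ (N + 2)).mulVec v i := hNle
    · have ht'' : t = N + 1 := le_antisymm ht h
      subst ht''
      have hstep := step_identity' D m v (N + 1) i
      have hmono := pow_mulVec_le' D hpos m hm v hle (N + 1) i
      simp only [Nat.sub_self, pow_zero, one_mul]
      nlinarith [hstep]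

/-- **Spectral lemma.** Let `D` be an irreducible nonnegative `s × s` real
matrix, `m > 0`, and `v` a positive vector with `D v ≤ m v` componentwise and
`D v ≠ m v`. Then there is `k*` such that for every `k ≥ k*` and every index
`i`, `(D^k v)_i < m^k`. -/
theorem irreducible_subinvariant_vector_lt
    {s : ℕ} (D : Matrix (Fin s) (Fin s) ℝ)
    (hpos : ∀ i j, 0 ≤ D i j)
    (hirr : ∀ i j : Fin s, ∃ k : ℕ, 0 < k ∧ 0 < (D ^ k) i j)
    (m : ℝ) (hm : 0 < m)
    (v : Fin s → ℝ) (hv : ∀ i, 0 < v i)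
    (hle : ∀ i, D.mulVec v i ≤ m * v i)
    (hne : D.mulVec v ≠ m • v) :
    ∃ k₀ : ℕ, ∀ k ≥ k₀, ∀ i, (D ^ k).mulVec v i < m ^ k := by
  rcases Nat.eq_zero_or_pos s with hs | hs
  · subst hs
    exact ⟨0, fun k _ i => i.elim0⟩
  have hne' : ∃ j, D.mulVec v j ≠ m * v j := by
    by_contra hc
    push_neg at hc
    exact hne (funext fun j => hc j)
  obtain ⟨j, hj⟩ := hne'
  have hdj : 0 < m * v j - D.mulVec v j := by
    have := hle j
    cases lt_or_eq_of_le this with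
    | inl h => linarith
    | inr h => exact absurd h hj
  -- the deficiency vector
  set d : Fin s → ℝ := fun l => m * v l - D.mulVec v l with hd
  have hdnn : ∀ l, 0 ≤ d l := fun l => sub_nonneg.2 (hle l)
  haveI : Nonempty (Fin s) := ⟨⟨0, hs⟩⟩
  -- common exponent with strict inequality at every coordinate
  set N : ℕ := Finset.univ.sup (fun i => (hirr i j).choose) with hN
  set M : ℕ := N + 1 with hM
  have hstrict : ∀ i, (D ^ M).mulVec v i < m ^ M * v i := by
    intro i
    obtain ⟨hk0, hkpos⟩ := (hirr i j).choose_spec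
    set k := (hirr i j).choose
    have hkN : k ≤ N := Finset.le_sup (f := fun i => (hirr i j).choose) (Finset.mem_univ i)
    have htel := telescope' D hpos m hm v hle N k hkN i
    have hDkd : 0 < (D ^ k).mulVec d i := by
      have hterm : (D ^ k) i j * d j ≤ (D ^ k).mulVec d i := by
        simp only [Matrix.mulVec, dotProduct]
        exact Finset.single_le_sum
          (fun l _ => mul_nonneg (pow_entry_nonneg' D hpos k i l) (hdnn l))
          (Finset.mem_univ j)
      exact lt_of_lt_of_le (mul_pos hkpos hdj) hterm
    have h1 : 0 < m ^ (N - k) * (D ^ k).mulVec d i :=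
      mul_pos (pow_pos hm _) hDkd
    have : 0 < m ^ (N + 1) * v i - (D ^ (N + 1)).mulVec v i :=
      lt_of_lt_of_le h1 htel
    simpa [hM] using this
  -- contraction factor
  have hMpos : 0 < M := Nat.succ_pos N
  set θ : ℝ := Finset.univ.sup' Finset.univ_nonempty
    (fun i => (D ^ M).mulVec v i / (m ^ M * v i)) with hθ
  have hmv : ∀ i, 0 < m ^ M * v i := fun i => mul_pos (pow_pos hm M) (hv i)
  have hθlt1 : θ < 1 := by
    rw [hθ, Finset.sup'_lt_iff]
    intro i _
    exact (div_lt_one (hmv i)).2 (hstrict i)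
  have hθnn : 0 ≤ θ := by
    obtain ⟨i⟩ := (inferInstance : Nonempty (Fin s))
    refine le_trans ?_ (Finset.le_sup' _ (Finset.mem_univ i))
    exact div_nonneg (mulVec_nonneg' _ (pow_entry_nonneg' D hpos M)
      (fun l => le_of_lt (hv l)) i) (le_of_lt (hmv i))
  have hθkey : ∀ i, (D ^ M).mulVec v i ≤ θ * (m ^ M * v i) := by
    intro i
    have := Finset.le_sup' (fun i => (D ^ M).mulVec v i / (m ^ M * v i))
      (Finset.mem_univ i)
    calc (D ^ M).mulVec v i
        = ((D ^ M).mulVec v i / (m ^ M * v i)) * (m ^ M * v i) :=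
          (div_mul_cancel₀ _ (ne_of_gt (hmv i))).symm
      _ ≤ θ * (m ^ M * v i) := mul_le_mul_of_nonneg_right this (le_of_lt (hmv i))
  -- geometric decay along multiples of M
  have hgeom : ∀ q i, (D ^ (q * M)).mulVec v i ≤ θ ^ q * m ^ (q * M) * v i := by
    intro q
    induction q with
    | zero => intro i; simp
    | succ n ih =>
      intro i
      have hsplit : (D ^ ((n + 1) * M)).mulVec v i
          = (D ^ (n * M)).mulVec ((D ^ M).mulVec v) i := by
        rw [Matrix.mulVec_mulVec, ← pow_add]
        ring_nf
      rw [hsplit]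
      have h1 : (D ^ (n * M)).mulVec ((D ^ M).mulVec v) i
          ≤ (D ^ (n * M)).mulVec ((θ * m ^ M) • v) i := by
        refine mulVec_mono' _ (pow_entry_nonneg' D hpos _) (fun l => ?_) i
        simpa [mul_assoc] using hθkey l
      have h2 : (D ^ (n * M)).mulVec ((θ * m ^ M) • v) i
          = (θ * m ^ M) * (D ^ (n * M)).mulVec v i := by
        rw [Matrix.mulVec_smul]; rfl
      have h3 : (θ * m ^ M) * (D ^ (n * M)).mulVec v i
          ≤ (θ * m ^ M) * (θ ^ n * m ^ (n * M) * v i) :=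
        mul_le_mul_of_nonneg_left (ih i)
          (mul_nonneg hθnn (le_of_lt (pow_pos hm M)))
      calc (D ^ (n * M)).mulVec ((D ^ M).mulVec v) i
          ≤ (θ * m ^ M) * (D ^ (n * M)).mulVec v i := by rw [← h2]; exact h1
        _ ≤ (θ * m ^ M) * (θ ^ n * m ^ (n * M) * v i) := h3
        _ = θ ^ (n + 1) * m ^ ((n + 1) * M) * v i := by
            rw [pow_succ, add_mul, one_mul, pow_add]; ring
  -- general exponents
  have hgen : ∀ k i, (D ^ k).mulVec v i ≤ θ ^ (k / M) * (m ^ k * v i) := by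
    intro k i
    have hk : k = (k / M) * M + k % M := by rw [Nat.mul_comm]; exact (Nat.div_add_mod k M).symm
    set q := k / M
    set r := k % M
    have hsplit : (D ^ k).mulVec v i = (D ^ (q * M)).mulVec ((D ^ r).mulVec v) i := by
      rw [Matrix.mulVec_mulVec, ← pow_add, ← hk]
    rw [hsplit]
    have h1 : (D ^ (q * M)).mulVec ((D ^ r).mulVec v) i
        ≤ (D ^ (q * M)).mulVec ((m ^ r) • v) i := by
      refine mulVec_mono' _ (pow_entry_nonneg' D hpos _) (fun l => ?_) i
      simpa using pow_mulVec_le' D hpos m hm v hle r l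
    have h2 : (D ^ (q * M)).mulVec ((m ^ r) • v) i
        = m ^ r * (D ^ (q * M)).mulVec v i := by
      rw [Matrix.mulVec_smul]; rfl
    calc (D ^ (q * M)).mulVec ((D ^ r).mulVec v) i
        ≤ m ^ r * (D ^ (q * M)).mulVec v i := by rw [← h2]; exact h1
      _ ≤ m ^ r * (θ ^ q * m ^ (q * M) * v i) :=
          mul_le_mul_of_nonneg_left (hgeom q i) (le_of_lt (pow_pos hm r))
      _ = θ ^ q * (m ^ (q * M + r) * v i) := by rw [pow_add]; ring
      _ = θ ^ q * (m ^ k * v i) := by rw [← hk]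
  -- choose the threshold
  set V : ℝ := Finset.univ.sup' Finset.univ_nonempty v with hV
  have hVpos : 0 < V := by
    obtain ⟨i⟩ := (inferInstance : Nonempty (Fin s))
    exact lt_of_lt_of_le (hv i) (Finset.le_sup' _ (Finset.mem_univ i))
  obtain ⟨T, hT⟩ := exists_pow_lt_of_lt_one (show (0:ℝ) < 1 / V by positivity) hθlt1
  refine ⟨M * T, fun k hk i => ?_⟩
  have hqT : T ≤ k / M := Nat.le_div_iff_mul_le hMpos |>.2 (by rw [Nat.mul_comm]; exact hk)
  have hθq : θ ^ (k / M) ≤ θ ^ T :=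
    pow_le_pow_of_le_one hθnn (le_of_lt hθlt1) hqT
  have hvV : v i ≤ V := Finset.le_sup' _ (Finset.mem_univ i)
  calc (D ^ k).mulVec v i ≤ θ ^ (k / M) * (m ^ k * v i) := hgen k i
    _ ≤ θ ^ T * (m ^ k * V) := by
        have h1 : m ^ k * v i ≤ m ^ k * V :=
          mul_le_mul_of_nonneg_left hvV (le_of_lt (pow_pos hm k))
        have h2 : 0 ≤ m ^ k * v i := le_of_lt (mul_pos (pow_pos hm k) (hv i))
        exact mul_le_mul hθq h1 h2 (pow_nonneg hθnn T)
    _ < (1 / V) * (m ^ k * V) := by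
        have : 0 < m ^ k * V := mul_pos (pow_pos hm k) hVpos
        exact mul_lt_mul_of_pos_right hT this
    _ = m ^ k := by field_simp
end

section
/- Suppose {K_1, …, K_p} and {K_1′, …, K_p′} are dust-like graph-directed sets on the same directed graph G, realized respectively by similitudes S_e on a compact metric space (X, d) and S_e′ on a compact metric space (X′, d′). If for each edge e the similitudes S_e and S_e′ have the same contraction ratio ρ_e, then K_i and K_i′ are bilipschitz equivalent for each i = 1, …, p. -/
/-- A realization of dust-like graph-directed sets on the directed graph with
`p` vertices, `a i j` edges from `i` to `j`, and ratio `ρ i j e` on each edge: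
nonempty compact sets `K i` with `K i = ⋃_j ⋃_e S i j e '' (K j)` a pairwise
disjoint union, `S i j e` a similitude of ratio `ρ i j e`. -/
structure GDRealization (X : Type*) [MetricSpace X] {p : ℕ}
    (a : Fin p → Fin p → ℕ) (ρ : ∀ i j : Fin p, Fin (a i j) → ℝ) where
  S : ∀ i j : Fin p, Fin (a i j) → X → X
  sim : ∀ i j e x y, dist (S i j e x) (S i j e y) = ρ i j e * dist x y
  K : Fin p → Set X
  nonempty : ∀ i, (K i).Nonempty
  compact : ∀ i, IsCompact (K i)
  union : ∀ i, K i = ⋃ j, ⋃ e, S i j e '' K j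
  disj : ∀ i : Fin p, ∀ j j' : Fin p, ∀ e : Fin (a i j), ∀ e' : Fin (a i j'),
    (⟨j, e⟩ : Σ j, Fin (a i j)) ≠ ⟨j', e'⟩ →
    Disjoint (S i j e '' K j) (S i j' e' '' K j')

open Set Filter Topology

theorem bilipEquivSets_of_dist_le_mul {ι X Y : Type*} [MetricSpace X] [MetricSpace Y]
    {π : ι → X} {π' : ι → Y} {C C' : ℝ}
    (h : ∀ s t, dist (π' s) (π' t) ≤ C * dist (π s) (π t))
    (h' : ∀ s t, dist (π s) (π t) ≤ C' * dist (π' s) (π' t)) :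
    BilipEquivSets (range π) (range π') := by
  have eq_of_eq : ∀ s t, π s = π t → π' s = π' t := fun s t hst =>
    dist_le_zero.1 (by simpa [hst] using h s t)
  let s : range π → ι := fun x => x.2.choose
  have hs : ∀ x, π (s x) = x := fun x => x.2.choose_spec
  let f : range π → range π' := fun x => ⟨π' (s x), mem_range_self _⟩
  have hdist : ∀ x y, dist x y = dist (π (s x)) (π (s y)) := fun x y => by
    rw [hs, hs, Subtype.dist_eq]
  refine ⟨f, ⟨fun x y hxy => ?_, ?_⟩, max 1 (max C C'), le_max_left _ _, fun x y => ?_⟩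
  · have hxy' : π' (s x) = π' (s y) := congrArg Subtype.val hxy
    exact Subtype.ext (by simpa [hs, hxy'] using h' (s x) (s y))
  · rintro ⟨_, t, rfl⟩
    exact ⟨⟨π t, mem_range_self t⟩, Subtype.ext (eq_of_eq _ _ (hs _))⟩
  · have hC := (le_max_left C C').trans (le_max_right 1 _)
    have hC' := (le_max_right C C').trans (le_max_right 1 _)
    rw [inv_mul_le_iff₀ (zero_lt_one.trans_le (le_max_left _ _)), hdist]
    exact ⟨(h' _ _).trans (mul_le_mul_of_nonneg_right hC' dist_nonneg),
      (h _ _).trans (mul_le_mul_of_nonneg_right hC dist_nonneg)⟩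

namespace GDRealization

variable {X Y : Type*} [MetricSpace X] [MetricSpace Y]
  {p : ℕ} {a : Fin p → Fin p → ℕ} {ρ : ∀ i j : Fin p, Fin (a i j) → ℝ}

abbrev Edge (a : Fin p → Fin p → ℕ) : Type := Σ i j : Fin p, Fin (a i j)

def edgeRatio (ρ : ∀ i j : Fin p, Fin (a i j) → ℝ) (e : Edge a) : ℝ := ρ e.1 e.2.1 e.2.2

def pathRatio (ρ : ∀ i j : Fin p, Fin (a i j) → ℝ) (c : ℕ → Edge a) (n : ℕ) : ℝ :=
  ∏ k ∈ Finset.range n, edgeRatio ρ (c k)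

lemma pathRatio_nonneg (hρ : ∀ i j e, ρ i j e ∈ Ioo (0 : ℝ) 1) (c : ℕ → Edge a) (n : ℕ) :
    0 ≤ pathRatio ρ c n :=
  Finset.prod_nonneg fun _ _ => (hρ _ _ _).1.le

lemma tendsto_pathRatio_zero (hρ : ∀ i j e, ρ i j e ∈ Ioo (0 : ℝ) 1) (c : ℕ → Edge a) :
    Tendsto (pathRatio ρ c) atTop (𝓝 0) := by
  have : Nonempty (Edge a) := ⟨c 0⟩
  obtain ⟨e₀, he₀⟩ := Finite.exists_max (edgeRatio ρ)
  refine squeeze_zero (pathRatio_nonneg hρ c) (fun n => ?_)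
    (tendsto_pow_atTop_nhds_zero_of_lt_one (hρ _ _ _).1.le (hρ e₀.1 e₀.2.1 e₀.2.2).2)
  calc pathRatio ρ c n ≤ ∏ _k ∈ Finset.range n, edgeRatio ρ e₀ :=
        Finset.prod_le_prod (fun _ _ => (hρ _ _ _).1.le) fun k _ => he₀ (c k)
    _ = edgeRatio ρ e₀ ^ n := by rw [Finset.prod_const, Finset.card_range]

variable (a) in
@[ext]
structure InfPath (i : Fin p) where
  edge : ℕ → Edge a
  fst_edge_zero : (edge 0).1 = i
  chain : ∀ n, (edge n).2.1 = (edge (n + 1)).1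

namespace InfPath

variable {i : Fin p}

lemma fst_edge_eq_of_eqOn {c c' : InfPath a i} {N : ℕ} (h : ∀ k < N, c.edge k = c'.edge k) :
    (c.edge N).1 = (c'.edge N).1 := by
  cases N with
  | zero => rw [c.fst_edge_zero, c'.fst_edge_zero]
  | succ n => rw [← c.chain, ← c'.chain, h n n.lt_succ_self]

lemma exists_eqOn_ne {c c' : InfPath a i} (h : c ≠ c') :
    ∃ N, (∀ k < N, c.edge k = c'.edge k) ∧ c.edge N ≠ c'.edge N := by
  have hne : ∃ n, c.edge n ≠ c'.edge n := by
    by_contra! hall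
    exact h (InfPath.ext (funext hall))
  exact ⟨Nat.find hne, fun k hk => not_not.1 (Nat.find_min hne hk), Nat.find_spec hne⟩

end InfPath

variable (H : GDRealization X a ρ)

def edgeMap (e : Edge a) : X → X := H.S e.1 e.2.1 e.2.2

lemma dist_edgeMap (e : Edge a) (x y : X) :
    dist (H.edgeMap e x) (H.edgeMap e y) = edgeRatio ρ e * dist x y :=
  H.sim _ _ _ x y

lemma continuous_edgeMap (e : Edge a) : Continuous (H.edgeMap e) := by
  refine (LipschitzWith.of_dist_le_mul (K := ‖edgeRatio ρ e‖₊) fun x y => ?_).continuous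
  rw [dist_edgeMap, coe_nnnorm, Real.norm_eq_abs]
  exact mul_le_mul_of_nonneg_right (le_abs_self _) dist_nonneg

def piece (e : Edge a) : Set X := H.edgeMap e '' H.K e.2.1

lemma piece_subset (e : Edge a) : H.piece e ⊆ H.K e.1 := by
  rw [H.union e.1]
  exact subset_iUnion₂_of_subset e.2.1 e.2.2 subset_rfl

lemma isCompact_piece (e : Edge a) : IsCompact (H.piece e) :=
  (H.compact _).image (H.continuous_edgeMap e)

lemma disjoint_piece {e e' : Edge a} (h : e.1 = e'.1) (hne : e ≠ e') :
    Disjoint (H.piece e) (H.piece e') := by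
  obtain ⟨i, j, e⟩ := e
  obtain ⟨i', j', e'⟩ := e'
  obtain rfl : i = i' := h
  exact H.disj i j j' e e' fun h => hne (congrArg (Sigma.mk i) h)

lemma exists_mem_piece {i : Fin p} {x : X} (hx : x ∈ H.K i) :
    ∃ e : Edge a, e.1 = i ∧ ∃ y ∈ H.K e.2.1, H.edgeMap e y = x := by
  rw [H.union i] at hx
  obtain ⟨j, e, y, hy, rfl⟩ := mem_iUnion₂.1 hx
  exact ⟨⟨i, j, e⟩, rfl, y, hy, rfl⟩

lemma exists_pos_le_dist_of_mem_piece :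
    ∃ δ > 0, ∀ e e' : Edge a, e.1 = e'.1 → e ≠ e' →
      ∀ x ∈ H.piece e, ∀ y ∈ H.piece e', δ ≤ dist x y := by
  have hpair : ∀ ee : Edge a × Edge a, ∀ᶠ δ in 𝓝[>] (0 : ℝ), ee.1.1 = ee.2.1 → ee.1 ≠ ee.2 →
      ∀ x ∈ H.piece ee.1, ∀ y ∈ H.piece ee.2, δ ≤ dist x y := by
    rintro ⟨e, e'⟩
    by_cases hee : e.1 = e'.1 ∧ e ≠ e'
    · obtain ⟨r, hr, hlt⟩ := Metric.exists_pos_forall_lt_edist (H.isCompact_piece e)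
        (H.isCompact_piece e').isClosed (H.disjoint_piece hee.1 hee.2)
      filter_upwards [Ioo_mem_nhdsGT hr] with δ hδ _ _ x hx y hy
      exact hδ.2.le.trans (le_of_lt (by simpa [edist_dist] using hlt x hx y hy))
    · exact Eventually.of_forall fun _ h h' => (hee ⟨h, h'⟩).elim
  obtain ⟨δ, hδ, hpos⟩ := ((eventually_all.2 hpair).and self_mem_nhdsWithin).exists
  exact ⟨δ, hpos, fun e e' => hδ (e, e')⟩

lemma dist_le_diam {j : Fin p} {x y : X} (hx : x ∈ H.K j) (hy : y ∈ H.K j) :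
    dist x y ≤ Metric.diam (⋃ j, H.K j) :=
  Metric.dist_le_diam_of_mem (isCompact_iUnion H.compact).isBounded
    (mem_iUnion_of_mem j hx) (mem_iUnion_of_mem j hy)

def cylMap (c : ℕ → Edge a) : ℕ → X → X
  | 0 => id
  | n + 1 => cylMap c n ∘ H.edgeMap (c n)

lemma dist_cylMap (c : ℕ → Edge a) (n : ℕ) (x y : X) :
    dist (H.cylMap c n x) (H.cylMap c n y) = pathRatio ρ c n * dist x y := by
  induction n generalizing x y with
  | zero => simp [cylMap, pathRatio]
  | succ n ih =>
    rw [cylMap, Function.comp_apply, Function.comp_apply, ih, dist_edgeMap, pathRatio, pathRatio,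
      Finset.prod_range_succ, mul_assoc]

lemma continuous_cylMap (c : ℕ → Edge a) (n : ℕ) : Continuous (H.cylMap c n) := by
  induction n with
  | zero => exact continuous_id
  | succ n ih => exact ih.comp (H.continuous_edgeMap _)

lemma cylMap_congr {c c' : ℕ → Edge a} {n : ℕ} (h : ∀ k < n, c k = c' k) :
    H.cylMap c n = H.cylMap c' n := by
  induction n with
  | zero => rfl
  | succ n ih =>
    rw [cylMap, cylMap, ih fun k hk => h k (hk.trans n.lt_succ_self), h n n.lt_succ_self]

variable {i : Fin p}

def cyl (c : InfPath a i) (n : ℕ) : Set X := H.cylMap c.edge n '' H.K (c.edge n).1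

lemma cyl_succ (c : InfPath a i) (n : ℕ) :
    H.cyl c (n + 1) = H.cylMap c.edge n '' H.piece (c.edge n) := by
  rw [cyl, piece, cylMap, image_comp, c.chain]

lemma isCompact_cyl (c : InfPath a i) (n : ℕ) : IsCompact (H.cyl c n) :=
  (H.compact _).image (H.continuous_cylMap _ n)

lemma exists_forall_mem_cyl (c : InfPath a i) : ∃ x, ∀ n, x ∈ H.cyl c n := by
  obtain ⟨x, hx⟩ := IsCompact.nonempty_iInter_of_sequence_nonempty_isCompact_isClosed (H.cyl c)
    (fun n => by rw [cyl_succ]; exact image_mono (H.piece_subset _))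
    (fun n => (H.nonempty _).image _) (H.isCompact_cyl c 0)
    (fun n => (H.isCompact_cyl c n).isClosed)
  exact ⟨x, mem_iInter.1 hx⟩

lemma eq_of_forall_mem_cyl (hρ : ∀ i j e, ρ i j e ∈ Ioo (0 : ℝ) 1) {c : InfPath a i} {x y : X}
    (hx : ∀ n, x ∈ H.cyl c n) (hy : ∀ n, y ∈ H.cyl c n) : x = y := by
  have hle : ∀ n, dist x y ≤ pathRatio ρ c.edge n * Metric.diam (⋃ j, H.K j) := fun n => by
    obtain ⟨x', hx', rfl⟩ := hx n
    obtain ⟨y', hy', rfl⟩ := hy n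
    rw [dist_cylMap]
    exact mul_le_mul_of_nonneg_left (H.dist_le_diam hx' hy') (pathRatio_nonneg hρ _ n)
  have hlim := (tendsto_pathRatio_zero hρ c.edge).mul_const (Metric.diam (⋃ j, H.K j))
  rw [zero_mul] at hlim
  exact dist_le_zero.1 (ge_of_tendsto' hlim hle)

lemma exists_infPath_forall_mem_cyl {x : X} (hx : x ∈ H.K i) :
    ∃ c : InfPath a i, ∀ n, x ∈ H.cyl c n := by
  let P := {q : Fin p × X // q.2 ∈ H.K q.1}
  choose e he y hy hey using fun q : P => H.exists_mem_piece q.2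
  let next : P → P := fun q => ⟨((e q).2.1, y q), hy q⟩
  let orbit : ℕ → P := fun n => next^[n] ⟨(i, x), hx⟩
  have orbit_succ : ∀ n, orbit (n + 1) = next (orbit n) := fun n =>
    Function.iterate_succ_apply' next n _
  refine ⟨⟨fun n => e (orbit n), he _, fun n => by rw [he (orbit (n + 1)), orbit_succ]⟩, fun n =>
    ⟨(orbit n).1.2, he (orbit n) ▸ (orbit n).2, ?_⟩⟩
  induction n with
  | zero => rfl
  | succ n ih =>
    rw [cylMap, Function.comp_apply, ← ih, orbit_succ]
    exact congrArg _ (hey (orbit n))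

/-- The point with address `c`. -/
noncomputable def proj (c : InfPath a i) : X := (H.exists_forall_mem_cyl c).choose

lemma proj_mem_cyl (c : InfPath a i) (n : ℕ) : H.proj c ∈ H.cyl c n :=
  (H.exists_forall_mem_cyl c).choose_spec n

lemma range_proj (hρ : ∀ i j e, ρ i j e ∈ Ioo (0 : ℝ) 1) (i : Fin p) :
    range (H.proj (i := i)) = H.K i := by
  refine Subset.antisymm (range_subset_iff.2 fun c => ?_) fun x hx => ?_
  · simpa [cyl, cylMap, c.fst_edge_zero] using H.proj_mem_cyl c 0
  · obtain ⟨c, hc⟩ := H.exists_infPath_forall_mem_cyl hx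
    exact ⟨c, H.eq_of_forall_mem_cyl hρ (H.proj_mem_cyl c) hc⟩

lemma exists_mem_piece_cylMap_eq_proj (c : InfPath a i) (n : ℕ) :
    ∃ u ∈ H.piece (c.edge n), H.cylMap c.edge n u = H.proj c := by
  simpa [cyl_succ] using H.proj_mem_cyl c (n + 1)

lemma exists_dist_proj_bounds (hρ : ∀ i j e, ρ i j e ∈ Ioo (0 : ℝ) 1) (i : Fin p) :
    ∃ δ > 0, ∃ D ≥ 0, ∀ (c c' : InfPath a i) (N : ℕ), (∀ k < N, c.edge k = c'.edge k) →
      c.edge N ≠ c'.edge N →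
      δ * pathRatio ρ c.edge N ≤ dist (H.proj c) (H.proj c') ∧
        dist (H.proj c) (H.proj c') ≤ D * pathRatio ρ c.edge N := by
  obtain ⟨δ, hδ, hsep⟩ := H.exists_pos_le_dist_of_mem_piece
  refine ⟨δ, hδ, Metric.diam (⋃ j, H.K j), Metric.diam_nonneg, fun c c' N hpre hne => ?_⟩
  obtain ⟨u, hu, hcu⟩ := H.exists_mem_piece_cylMap_eq_proj c N
  obtain ⟨v, hv, hcv⟩ := H.exists_mem_piece_cylMap_eq_proj c' N
  have hfst := InfPath.fst_edge_eq_of_eqOn hpre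
  have hdist : dist (H.proj c) (H.proj c') = pathRatio ρ c.edge N * dist u v := by
    rw [← hcu, ← hcv, ← H.cylMap_congr hpre, dist_cylMap]
  have hw := pathRatio_nonneg hρ c.edge N
  have hv' : v ∈ H.K (c.edge N).1 := hfst ▸ H.piece_subset _ hv
  rw [hdist]
  exact ⟨(mul_comm δ _).le.trans (mul_le_mul_of_nonneg_left (hsep _ _ hfst hne u hu v hv) hw),
    (mul_le_mul_of_nonneg_left (H.dist_le_diam (H.piece_subset _ hu) hv') hw).trans
      (mul_comm _ _).le⟩

lemma exists_dist_proj_le_mul (H' : GDRealization Y a ρ) (hρ : ∀ i j e, ρ i j e ∈ Ioo (0 : ℝ) 1)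
    (i : Fin p) : ∃ C, ∀ c c' : InfPath a i,
      dist (H'.proj c) (H'.proj c') ≤ C * dist (H.proj c) (H.proj c') := by
  obtain ⟨δ, hδ, _, _, hH⟩ := H.exists_dist_proj_bounds hρ i
  obtain ⟨_, _, D', hD', hH'⟩ := H'.exists_dist_proj_bounds hρ i
  refine ⟨D' / δ, fun c c' => ?_⟩
  rcases eq_or_ne c c' with rfl | hne
  · simp
  obtain ⟨N, hpre, hN⟩ := InfPath.exists_eqOn_ne hne
  calc dist (H'.proj c) (H'.proj c') ≤ D' * pathRatio ρ c.edge N := (hH' c c' N hpre hN).2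
    _ = D' / δ * (δ * pathRatio ρ c.edge N) := by field_simp
    _ ≤ D' / δ * dist (H.proj c) (H.proj c') := by
      gcongr
      exact (hH c c' N hpre hN).1

end GDRealization

theorem gdRealization_same_graph_bilip_general
    {X X' : Type*} [MetricSpace X] [MetricSpace X']
    {p : ℕ} (a : Fin p → Fin p → ℕ) (ρ : ∀ i j : Fin p, Fin (a i j) → ℝ)
    (hρ : ∀ i j e, ρ i j e ∈ Set.Ioo (0 : ℝ) 1)
    (G : GDRealization X a ρ) (G' : GDRealization X' a ρ) :
    ∀ i : Fin p, BilipEquivSets (G.K i) (G'.K i) := by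
  intro i
  obtain ⟨C, hC⟩ := G.exists_dist_proj_le_mul G' hρ i
  obtain ⟨C', hC'⟩ := G'.exists_dist_proj_le_mul G hρ i
  rw [← G.range_proj hρ i, ← G'.range_proj hρ i]
  exact bilipEquivSets_of_dist_le_mul hC hC'

/-- **Lemma (Rao–Ruan–Xi).** If `{K_i}` and `{K_i'}` are dust-like
graph-directed sets on the same directed graph, realized in compact metric
spaces `X` and `X'` by similitudes with the same ratios `ρ_e ∈ (0,1)` on each
edge `e`, then `K_i` and `K_i'` are bilipschitz equivalent for each `i`. -/
theorem gdRealization_same_graph_bilip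
    {X X' : Type*} [MetricSpace X] [CompactSpace X] [MetricSpace X'] [CompactSpace X']
    {p : ℕ} (a : Fin p → Fin p → ℕ) (ρ : ∀ i j : Fin p, Fin (a i j) → ℝ)
    (hρ : ∀ i j e, ρ i j e ∈ Set.Ioo (0 : ℝ) 1)
    (G : GDRealization X a ρ) (G' : GDRealization X' a ρ) :
    ∀ i : Fin p, BilipEquivSets (G.K i) (G'.K i) :=
  gdRealization_same_graph_bilip_general a ρ hρ G G'
end

section
/- Suppose E is a dust-like self-similar set in a compact metric space. Let K = ⋃_{i=1}^n f_i(E) be a union of pairwise disjoint sets in a metric space, where n ≥ 1 and each f_i : E → f_i(E) is a bilipschitz bijection onto its image. Then K and E are bilipschitz equivalent. -/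
/-!
Fix two cells `A = T_a E` and `T_b E`. As `T_b` maps `E` into itself, the map that applies `T_b`
on the orbit `W = ⋃ₖ T_bᵏ A` and fixes the rest of `E` is a bijection of `E` onto `E \ A`
(Hilbert's hotel). It is bilipschitz: for `x ∈ W` and `y ∈ E \ W` there is a level `s` such that
`x, y` are the `T_bˢ`-images, and `T_b x, y` the `T_bˢ`- or `T_bˢ⁺¹`-images, of points of `E`
separated by `A` or by `T_b E`, so both distances are comparable to `c_bˢ`. Thus `E` is the disjoint
union of two bilipschitz copies `A` and `E \ A` of itself. Bilipschitz maps on two disjoint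
compact sets with disjoint images glue to a bilipschitz map, since the pieces are a positive
distance apart, and induction on the number of copies gives the theorem.
-/

open Set Function Metric

section Bilipschitz

variable {X Y Z : Type*} [MetricSpace X] [MetricSpace Y] [MetricSpace Z]

def BilipOnWith (C : ℝ) (φ : X → Y) (E : Set X) : Prop :=
  ∀ x ∈ E, ∀ y ∈ E, C⁻¹ * dist x y ≤ dist (φ x) (φ y) ∧ dist (φ x) (φ y) ≤ C * dist x y

def BilipOn (E : Set X) (F : Set Y) : Prop :=
  ∃ φ : X → Y, BijOn φ E F ∧ ∃ C, 1 ≤ C ∧ BilipOnWith C φ E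

theorem inv_mul_le_and_le_mul_of_mem_Icc {a b Δ₁ D₁ Δ₂ D₂ C : ℝ} (hΔ₁ : 0 < Δ₁) (hΔ₂ : 0 < Δ₂)
    (ha : a ∈ Icc Δ₁ D₁) (hb : b ∈ Icc Δ₂ D₂) (h₁ : D₂ ≤ C * Δ₁) (h₂ : D₁ ≤ C * Δ₂) :
    C⁻¹ * a ≤ b ∧ b ≤ C * a := by
  have hC : 0 < C := pos_of_mul_pos_left (by linarith [hb.1, hb.2]) hΔ₁.le
  refine ⟨(inv_mul_le_iff₀ hC).2 ?_, ?_⟩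
  · calc a ≤ D₁ := ha.2
      _ ≤ C * Δ₂ := h₂
      _ ≤ C * b := by gcongr; exact hb.1
  · calc b ≤ D₂ := hb.2
      _ ≤ C * Δ₁ := h₁
      _ ≤ C * a := by gcongr; exact ha.1

namespace BilipOnWith

variable {C : ℝ} {φ ψ : X → Y} {E : Set X}

theorem of_dist_eq {c : ℝ} (hφ : ∀ x y, dist (φ x) (φ y) = c * dist x y) (h₁ : C⁻¹ ≤ c)
    (h₂ : c ≤ C) : BilipOnWith C φ E := fun x _ y _ => by
  rw [hφ]
  exact ⟨by gcongr, by gcongr⟩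

theorem congr (h : BilipOnWith C φ E) (hφψ : EqOn φ ψ E) : BilipOnWith C ψ E := by
  intro x hx y hy
  rw [← hφψ hx, ← hφψ hy]
  exact h x hx y hy

theorem mono_const {C' : ℝ} (h : BilipOnWith C φ E) (hC : 0 < C) (hCC' : C ≤ C') :
    BilipOnWith C' φ E := by
  intro x hx y hy
  obtain ⟨h₁, h₂⟩ := h x hx y hy
  exact ⟨(mul_le_mul_of_nonneg_right (inv_anti₀ hC hCC') dist_nonneg).trans h₁,
    h₂.trans (by gcongr)⟩

theorem union {s t : Set X} (hs : BilipOnWith C φ s) (ht : BilipOnWith C φ t)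
    (hst : ∀ x ∈ s, ∀ y ∈ t,
      C⁻¹ * dist x y ≤ dist (φ x) (φ y) ∧ dist (φ x) (φ y) ≤ C * dist x y) :
    BilipOnWith C φ (s ∪ t) := by
  rintro x (hx | hx) y (hy | hy)
  · exact hs x hx y hy
  · exact hst x hx y hy
  · rw [dist_comm x, dist_comm (φ x)]
    exact hst y hy x hx
  · exact ht x hx y hy

theorem injOn (h : BilipOnWith C φ E) (hC : 0 < C) : InjOn φ E := by
  intro x hx y hy hxy
  have := (h x hx y hy).1
  rw [hxy, dist_self] at this
  exact dist_le_zero.1 (nonpos_of_mul_nonpos_right this (inv_pos.2 hC))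

theorem lipschitzOnWith (h : BilipOnWith C φ E) : LipschitzOnWith (Real.toNNReal C) φ E :=
  LipschitzOnWith.of_dist_le_mul fun x hx y hy =>
    (h x hx y hy).2.trans (by gcongr; exact Real.le_coe_toNNReal C)

theorem comp {C' : ℝ} {χ : Y → Z} {F : Set Y} (hχ : BilipOnWith C' χ F) (hφ : BilipOnWith C φ E)
    (hmaps : MapsTo φ E F) (hC' : 0 ≤ C') : BilipOnWith (C' * C) (χ ∘ φ) E := by
  intro x hx y hy
  obtain ⟨h₁, h₂⟩ := hφ x hx y hy
  obtain ⟨h₃, h₄⟩ := hχ _ (hmaps hx) _ (hmaps hy)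
  constructor
  · calc (C' * C)⁻¹ * dist x y = C'⁻¹ * (C⁻¹ * dist x y) := by rw [mul_inv]; ring
      _ ≤ C'⁻¹ * dist (φ x) (φ y) := by gcongr
      _ ≤ _ := h₃
  · calc dist (χ (φ x)) (χ (φ y)) ≤ C' * dist (φ x) (φ y) := h₄
      _ ≤ C' * (C * dist x y) := by gcongr
      _ = C' * C * dist x y := by ring

theorem inv {F : Set Y} {ψ : Y → X} (h : BilipOnWith C φ E) (hψ : InvOn ψ φ E F)
    (hmaps : MapsTo ψ F E) (hC : 0 < C) : BilipOnWith C ψ F := by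
  intro u hu v hv
  obtain ⟨h₁, h₂⟩ := h _ (hmaps hu) _ (hmaps hv)
  rw [hψ.2 hu, hψ.2 hv] at h₁ h₂
  exact ⟨(inv_mul_le_iff₀ hC).2 h₂, (inv_mul_le_iff₀ hC).1 h₁⟩

theorem bilipOn_image (h : BilipOnWith C φ E) (hC : 1 ≤ C) : BilipOn E (φ '' E) :=
  ⟨φ, (h.injOn (by linarith)).bijOn_image, C, hC, h⟩

end BilipOnWith

theorem exists_pos_le_dist_of_disjoint {s t : Set X} (hs : IsCompact s) (ht : IsCompact t)
    (hst : Disjoint s t) : ∃ δ > 0, ∀ x ∈ s, ∀ y ∈ t, δ ≤ dist x y := by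
  obtain ⟨δ, hδ, h⟩ := (hs.prod ht).exists_forall_le' continuous_dist.continuousOn (a := 0)
    fun p hp => dist_pos.2 (hst.ne_of_mem hp.1 hp.2)
  exact ⟨δ, hδ, fun x hx y hy => h (x, y) ⟨hx, hy⟩⟩

theorem exists_pos_le_dist_of_pairwise_disjoint {ι : Type*} [Finite ι] {P : ι → Set X}
    (hP : ∀ i, IsCompact (P i)) (hd : Pairwise (Disjoint on P)) :
    ∃ δ > 0, ∀ i j, i ≠ j → ∀ x ∈ P i, ∀ y ∈ P j, δ ≤ dist x y := by
  have hS : IsCompact (⋃ p : {p : ι × ι // p.1 ≠ p.2}, P p.1.1 ×ˢ P p.1.2) :=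
    isCompact_iUnion fun p => (hP _).prod (hP _)
  obtain ⟨δ, hδ, h⟩ := hS.exists_forall_le' continuous_dist.continuousOn (a := 0) fun q hq => by
    obtain ⟨p, hq⟩ := mem_iUnion.1 hq
    exact dist_pos.2 ((hd p.2).ne_of_mem hq.1 hq.2)
  exact ⟨δ, hδ, fun i j hij x hx y hy => h (x, y) (mem_iUnion.2 ⟨⟨(i, j), hij⟩, hx, hy⟩)⟩

namespace BilipOn

variable {E : Set X} {F : Set Y} {G : Set Z}

theorem symm [Nonempty X] (h : BilipOn E F) : BilipOn F E := by
  obtain ⟨φ, hφ, C, hC, hb⟩ := h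
  have hinv := hφ.invOn_invFunOn
  have hψ := hφ.symm hinv.symm
  exact ⟨invFunOn φ E, hψ, C, hC, hb.inv hinv hψ.mapsTo (by linarith)⟩

theorem trans (h₁ : BilipOn E F) (h₂ : BilipOn F G) : BilipOn E G := by
  obtain ⟨φ, hφ, C, hC, hb⟩ := h₁
  obtain ⟨χ, hχ, C', hC', hb'⟩ := h₂
  exact ⟨χ ∘ φ, hχ.comp hφ, C' * C, one_le_mul_of_one_le_of_one_le hC' hC,
    hb'.comp hb hφ.mapsTo (by linarith)⟩

theorem isCompact (h : BilipOn E F) (hE : IsCompact E) : IsCompact F := by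
  obtain ⟨φ, hφ, C, -, hb⟩ := h
  rw [← hφ.image_eq]
  exact hE.image_of_continuousOn hb.lipschitzOnWith.continuousOn

theorem bilipEquivSets (h : BilipOn E F) : BilipEquivSets E F := by
  obtain ⟨φ, hφ, C, hC, hb⟩ := h
  exact ⟨hφ.mapsTo.restrict φ E F, hφ.bijective, C, hC, fun x y => hb x x.2 y y.2⟩

theorem union {E' : Set X} {F' : Set Y} (h : BilipOn E F) (h' : BilipOn E' F')
    (hE : IsCompact E) (hE' : IsCompact E') (hEE' : Disjoint E E') (hFF' : Disjoint F F') :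
    BilipOn (E ∪ E') (F ∪ F') := by
  classical
  obtain ⟨Δ₁, hΔ₁, hgap₁⟩ := exists_pos_le_dist_of_disjoint hE hE' hEE'
  have hF := h.isCompact hE
  have hF' := h'.isCompact hE'
  obtain ⟨Δ₂, hΔ₂, hgap₂⟩ := exists_pos_le_dist_of_disjoint hF hF' hFF'
  obtain ⟨φ, hφ, C₁, hC₁, hb₁⟩ := h
  obtain ⟨φ', hφ', C₂, hC₂, hb₂⟩ := h'
  set Φ := E.piecewise φ φ'
  have hΦ : EqOn φ Φ E := (piecewise_eqOn E φ φ').symm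
  have hΦ' : EqOn φ' Φ E' := fun x hx =>
    (piecewise_eq_of_notMem _ _ _ (hEE'.notMem_of_mem_right hx)).symm
  set D₁ := diam (E ∪ E')
  set D₂ := diam (F ∪ F')
  set C := max (max C₁ C₂) (max (D₂ / Δ₁) (D₁ / Δ₂))
  have hC : 1 ≤ C := le_max_of_le_left (le_max_of_le_left hC₁)
  have hb : BilipOnWith C Φ (E ∪ E') := by
    refine ((hb₁.congr hΦ).mono_const (by linarith) (le_max_of_le_left (le_max_left _ _))).union
      ((hb₂.congr hΦ').mono_const (by linarith) (le_max_of_le_left (le_max_right _ _)))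
      fun x hx y hy => ?_
    have hFx : Φ x ∈ F := hΦ hx ▸ hφ.mapsTo hx
    have hFy : Φ y ∈ F' := hΦ' hy ▸ hφ'.mapsTo hy
    refine inv_mul_le_and_le_mul_of_mem_Icc hΔ₁ hΔ₂
      ⟨hgap₁ x hx y hy, dist_le_diam_of_mem (hE.union hE').isBounded (.inl hx) (.inr hy)⟩
      ⟨hgap₂ _ hFx _ hFy,
        dist_le_diam_of_mem (hF.union hF').isBounded (.inl hFx) (.inr hFy)⟩
      ((div_le_iff₀ hΔ₁).1 (le_max_of_le_right (le_max_left _ _)))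
      ((div_le_iff₀ hΔ₂).1 (le_max_of_le_right (le_max_right _ _)))
  exact ⟨Φ, (hφ.congr hΦ).union (hφ'.congr hΦ') (hb.injOn (by linarith)), C, hC, hb⟩

end BilipOn

end Bilipschitz

section Orbit

variable {α : Type*} {T : α → α} {E A : Set α}

theorem mapsTo_iUnion_iterate_image (T : α → α) (A : Set α) :
    MapsTo T (⋃ k, T^[k] '' A) (⋃ k, T^[k] '' A) := by
  rintro _ ⟨_, ⟨k, rfl⟩, a, ha, rfl⟩
  exact mem_iUnion.2 ⟨k + 1, a, ha, iterate_succ_apply' T k a⟩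

open scoped Classical in
theorem bijOn_piecewise_iUnion_iterate_image (hTE : MapsTo T E E) (hT : InjOn T E)
    (hAE : A ⊆ E) (hA : Disjoint A (T '' E)) :
    BijOn ((⋃ k, T^[k] '' A).piecewise T id) E (E \ A) := by
  set W := ⋃ k, T^[k] '' A
  have hWE : W ⊆ E := iUnion_subset fun k => (image_mono hAE).trans (hTE.iterate k).image_subset
  have hAW : A ⊆ W := subset_iUnion_of_subset 0 (by simp)
  have hTW : MapsTo T W W := mapsTo_iUnion_iterate_image T A
  have hmem : ∀ x, W.piecewise T id x ∈ W ↔ x ∈ W := fun x => by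
    by_cases hx : x ∈ W
    · simpa [piecewise_eq_of_mem _ _ _ hx, hx] using hTW hx
    · simp [hx]
  refine ⟨fun x hx => ?_, fun x hx y hy hxy => ?_, fun z hz => ?_⟩
  · by_cases hxW : x ∈ W
    · rw [piecewise_eq_of_mem _ _ _ hxW]
      exact ⟨hTE hx, hA.notMem_of_mem_right (mem_image_of_mem T hx)⟩
    · rw [piecewise_eq_of_notMem _ _ _ hxW]
      exact ⟨hx, fun h => hxW (hAW h)⟩
  · by_cases hxW : x ∈ W
    · have hyW : y ∈ W := (hmem y).1 (hxy ▸ (hmem x).2 hxW)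
      rw [piecewise_eq_of_mem _ _ _ hxW, piecewise_eq_of_mem _ _ _ hyW] at hxy
      exact hT hx hy hxy
    · have hyW : y ∉ W := fun hyW => hxW ((hmem x).1 (hxy ▸ (hmem y).2 hyW))
      rwa [piecewise_eq_of_notMem _ _ _ hxW, piecewise_eq_of_notMem _ _ _ hyW] at hxy
  · by_cases hzW : z ∈ W
    · obtain ⟨k, a, ha, rfl⟩ := mem_iUnion.1 hzW
      obtain _ | k := k
      · exact absurd ha hz.2
      have hW : T^[k] a ∈ W := mem_iUnion.2 ⟨k, a, ha, rfl⟩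
      refine ⟨T^[k] a, hWE hW, ?_⟩
      rw [piecewise_eq_of_mem _ _ _ hW, iterate_succ_apply']
    · exact ⟨z, hz.1, piecewise_eq_of_notMem _ _ _ hzW⟩

def SeparatedAtLevel (T : α → α) (E : Set α) (𝒮 : Set (Set α)) (s : ℕ) (p q : α) : Prop :=
  ∃ S ∈ 𝒮, ∃ u ∈ S, ∃ v ∈ E \ S, T^[s] u = p ∧ T^[s] v = q

theorem SeparatedAtLevel.succ {𝒮 : Set (Set α)} {s : ℕ} {p q : α}
    (h : SeparatedAtLevel T E 𝒮 s p q) : SeparatedAtLevel T E 𝒮 (s + 1) (T p) (T q) := by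
  obtain ⟨S, hS, u, hu, v, hv, rfl, rfl⟩ := h
  exact ⟨S, hS, u, hu, v, hv, iterate_succ_apply' T s u, iterate_succ_apply' T s v⟩

theorem exists_separatedAtLevel (hTE : MapsTo T E E) (hAE : A ⊆ E) {k : ℕ} {x y : α}
    (hx : x ∈ T^[k] '' A) (hy : y ∈ E \ ⋃ k, T^[k] '' A) :
    ∃ s, SeparatedAtLevel T E {A, T '' E} s x y ∧
      (SeparatedAtLevel T E {A, T '' E} s (T x) y ∨
        SeparatedAtLevel T E {A, T '' E} (s + 1) (T x) y) := by
  induction k generalizing x y with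
  | zero =>
    obtain ⟨x, hxA, rfl⟩ := hx
    have hyA : y ∉ A := fun h => hy.2 (mem_iUnion.2 ⟨0, y, h, rfl⟩)
    by_cases hyT : y ∈ T '' E
    · obtain ⟨y', hy', rfl⟩ := hyT
      have hy'A : y' ∉ A := fun h => hy.2 (mem_iUnion.2 ⟨1, y', h, rfl⟩)
      exact ⟨0, ⟨A, .inl rfl, x, hxA, T y', ⟨hy.1, hyA⟩, rfl, rfl⟩,
        .inr ⟨A, .inl rfl, x, hxA, y', ⟨hy', hy'A⟩, rfl, rfl⟩⟩
    · exact ⟨0, ⟨A, .inl rfl, x, hxA, y, ⟨hy.1, hyA⟩, rfl, rfl⟩,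
        .inl ⟨T '' E, .inr rfl, T x, mem_image_of_mem T (hAE hxA), y, ⟨hy.1, hyT⟩, rfl, rfl⟩⟩
  | succ k ih =>
    obtain ⟨a, ha, rfl⟩ := hx
    rw [iterate_succ_apply']
    have hxE : T^[k] a ∈ E := hTE.iterate k (hAE ha)
    by_cases hyT : y ∈ T '' E
    · obtain ⟨y', hy', rfl⟩ := hyT
      have hy'W : y' ∉ ⋃ k, T^[k] '' A := fun h => hy.2 (mapsTo_iUnion_iterate_image T A h)
      obtain ⟨s, h₁, h₂⟩ := ih (mem_image_of_mem _ ha) ⟨hy', hy'W⟩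
      exact ⟨s + 1, h₁.succ, h₂.imp (·.succ) (·.succ)⟩
    · exact ⟨0, ⟨T '' E, .inr rfl, _, mem_image_of_mem T hxE, y, ⟨hy.1, hyT⟩, rfl, rfl⟩,
        .inl ⟨T '' E, .inr rfl, _, mem_image_of_mem T (hTE hxE), y, ⟨hy.1, hyT⟩, rfl, rfl⟩⟩

end Orbit

section Similitude

variable {X : Type*} [MetricSpace X] {T : X → X} {c : ℝ}

theorem dist_iterate_eq (hT : ∀ x y, dist (T x) (T y) = c * dist x y) (k : ℕ) (x y : X) :
    dist (T^[k] x) (T^[k] y) = c ^ k * dist x y := by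
  induction k with
  | zero => simp
  | succ k ih =>
    rw [iterate_succ_apply', iterate_succ_apply', hT, ih, pow_succ]
    ring

theorem bilipOnWith_inv_of_dist_eq (hT : ∀ x y, dist (T x) (T y) = c * dist x y) (hc₀ : 0 < c)
    (hc₁ : c ≤ 1) (E : Set X) : BilipOnWith c⁻¹ T E :=
  .of_dist_eq hT (inv_inv c).le (le_trans hc₁ (one_le_inv₀ hc₀ |>.2 hc₁))

theorem SeparatedAtLevel.dist_mem_Icc {E : Set X} {𝒮 : Set (Set X)} {s : ℕ} {p q : X}
    {Δ D : ℝ} (h : SeparatedAtLevel T E 𝒮 s p q) (hT : ∀ x y, dist (T x) (T y) = c * dist x y)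
    (hc : 0 ≤ c) (hsep : ∀ S ∈ 𝒮, ∀ u ∈ S, ∀ v ∈ E \ S, dist u v ∈ Icc Δ D) :
    dist p q ∈ Icc (c ^ s * Δ) (c ^ s * D) := by
  obtain ⟨S, hS, u, hu, v, hv, rfl, rfl⟩ := h
  obtain ⟨h₁, h₂⟩ := hsep S hS u hu v hv
  rw [dist_iterate_eq hT]
  exact ⟨by gcongr, by gcongr⟩

open scoped Classical in
theorem bilipOnWith_piecewise_iUnion_iterate_image {E A : Set X} {Δ D C : ℝ}
    (hT : ∀ x y, dist (T x) (T y) = c * dist x y) (hc₀ : 0 < c) (hc₁ : c ≤ 1)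
    (hTE : MapsTo T E E) (hAE : A ⊆ E) (hΔ : 0 < Δ)
    (hsep : ∀ S ∈ ({A, T '' E} : Set (Set X)), ∀ u ∈ S, ∀ v ∈ E \ S, dist u v ∈ Icc Δ D)
    (hC : 1 ≤ C * c) (hCD : D ≤ C * c * Δ) :
    BilipOnWith C ((⋃ k, T^[k] '' A).piecewise T id) E := by
  set W := ⋃ k, T^[k] '' A
  have hC₁ : 1 ≤ C := by nlinarith
  have hCc : C⁻¹ ≤ c := by rwa [inv_le_iff_one_le_mul₀ (by linarith), mul_comm]
  have hW : BilipOnWith C (W.piecewise T id) (E ∩ W) :=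
    (BilipOnWith.of_dist_eq hT hCc (hc₁.trans hC₁)).congr
      fun x hx => (piecewise_eq_of_mem _ _ _ hx.2).symm
  have hWc : BilipOnWith C (W.piecewise T id) (E \ W) :=
    (BilipOnWith.of_dist_eq (φ := id) (c := 1) (fun _ _ => (one_mul _).symm)
      (inv_le_one_of_one_le₀ hC₁) hC₁).congr fun x hx => (piecewise_eq_of_notMem _ _ _ hx.2).symm
  have h := hW.union hWc fun x hx y hy => by
    rw [piecewise_eq_of_mem _ _ _ hx.2, piecewise_eq_of_notMem _ _ _ hy.2, id]
    obtain ⟨k, hk⟩ := mem_iUnion.1 hx.2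
    obtain ⟨s, h₁, h₂⟩ := exists_separatedAtLevel hTE hAE hk hy
    have hxy := h₁.dist_mem_Icc hT hc₀.le hsep
    have hcs : c ^ (s + 1) ≤ c ^ s := pow_le_pow_of_le_one hc₀.le hc₁ s.le_succ
    have hΔD : Δ ≤ D := le_of_mul_le_mul_left (hxy.1.trans hxy.2) (pow_pos hc₀ s)
    have hTxy : dist (T x) y ∈ Icc (c ^ (s + 1) * Δ) (c ^ s * D) := by
      rcases h₂ with h₂ | h₂
      · have := h₂.dist_mem_Icc hT hc₀.le hsep
        exact ⟨le_trans (by gcongr) this.1, this.2⟩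
      · have := h₂.dist_mem_Icc hT hc₀.le hsep
        exact ⟨this.1, this.2.trans (by gcongr; linarith)⟩
    refine inv_mul_le_and_le_mul_of_mem_Icc (by positivity) (by positivity) hxy hTxy ?_ ?_
    · calc c ^ s * D ≤ c ^ s * (C * c * Δ) := by gcongr
        _ = c * (C * (c ^ s * Δ)) := by ring
        _ ≤ C * (c ^ s * Δ) := mul_le_of_le_one_left (mul_nonneg (by linarith) (by positivity)) hc₁
    · calc c ^ s * D ≤ c ^ s * (C * c * Δ) := by gcongr
        _ = C * (c ^ (s + 1) * Δ) := by ring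
  rwa [inter_union_sdiff] at h

theorem bilipOn_sdiff_of_dist_eq {E A : Set X} {Δ D : ℝ}
    (hT : ∀ x y, dist (T x) (T y) = c * dist x y) (hc₀ : 0 < c) (hc₁ : c ≤ 1)
    (hTE : MapsTo T E E) (hAE : A ⊆ E) (hA : Disjoint A (T '' E)) (hΔ : 0 < Δ)
    (hsep : ∀ S ∈ ({A, T '' E} : Set (Set X)), ∀ u ∈ S, ∀ v ∈ E \ S, dist u v ∈ Icc Δ D) :
    BilipOn E (E \ A) := by
  classical
  set C := max 1 (D / Δ) / c
  have hCc : C * c = max 1 (D / Δ) := div_mul_cancel₀ _ hc₀.ne'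
  have hC : 1 ≤ C * c := hCc ▸ le_max_left _ _
  have hCD : D ≤ C * c * Δ := hCc ▸ (div_le_iff₀ hΔ).1 (le_max_right _ _)
  refine ⟨_, bijOn_piecewise_iUnion_iterate_image hTE
    ((bilipOnWith_inv_of_dist_eq hT hc₀ hc₁ E).injOn (inv_pos.2 hc₀)) hAE hA, C, ?_,
    bilipOnWith_piecewise_iUnion_iterate_image hT hc₀ hc₁ hTE hAE hΔ hsep hC hCD⟩
  nlinarith

end Similitude

section SelfSimilar

variable {X Y : Type*} [MetricSpace X] [MetricSpace Y] {ι : Type*} {E : Set X}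
  {T : ι → X → X} {c : ι → ℝ}

theorem bilipOn_sdiff_image_of_dustLike [Finite ι] (hE : IsCompact E)
    (hc : ∀ i, c i ∈ Ioo 0 1) (hsim : ∀ i x y, dist (T i x) (T i y) = c i * dist x y)
    (hunion : E = ⋃ i, T i '' E) (hdisj : Pairwise (Disjoint on fun i => T i '' E)) {a b : ι}
    (hab : a ≠ b) : BilipOn E (E \ T a '' E) := by
  have hcell : ∀ i, T i '' E ⊆ E := fun i => (subset_iUnion (fun i => T i '' E) i).trans hunion.ge
  have hTE : ∀ i, MapsTo (T i) E E := fun i x hx => hcell i (mem_image_of_mem _ hx)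
  obtain ⟨Δ, hΔ, hgap⟩ := exists_pos_le_dist_of_pairwise_disjoint (fun i =>
    ((bilipOnWith_inv_of_dist_eq (hsim i) (hc i).1 (hc i).2.le E).bilipOn_image
      (one_le_inv₀ (hc i).1 |>.2 (hc i).2.le)).isCompact hE) hdisj
  refine bilipOn_sdiff_of_dist_eq (hsim b) (hc b).1 (hc b).2.le (hTE b) (hcell a) (hdisj hab) hΔ
    (D := diam E) ?_
  rintro S hS u hu v ⟨hvE, hvS⟩
  obtain ⟨i, rfl⟩ : ∃ i, S = T i '' E := by
    rcases hS with rfl | rfl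
    exacts [⟨a, rfl⟩, ⟨b, rfl⟩]
  obtain ⟨j, hj⟩ := mem_iUnion.1 (hunion ▸ hvE)
  exact ⟨hgap i j (by rintro rfl; exact hvS hj) u hu v hj,
    dist_le_diam_of_mem hE.isBounded (hcell i hu) hvE⟩

theorem BilipOn.biUnion_of_sdiff [Nonempty X] {A : Set X} (hE : IsCompact E) (hAE : A ⊆ E)
    (hA : BilipOn E A) (hEA : BilipOn E (E \ A)) {P : ι → Set Y} {s : Finset ι}
    (hs : s.Nonempty) (hP : ∀ i ∈ s, BilipOn E (P i)) (hPd : (s : Set ι).PairwiseDisjoint P) :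
    BilipOn E (⋃ i ∈ s, P i) := by
  classical
  induction hs using Finset.Nonempty.cons_induction with
  | singleton a => simpa using hP a (Finset.mem_singleton_self a)
  | cons a s ha hs ih =>
    rw [Finset.cons_eq_insert, Finset.set_biUnion_insert, ← union_sdiff_cancel hAE]
    refine (hA.symm.trans (hP a (Finset.mem_cons_self a s))).union
      (hEA.symm.trans (ih (fun i hi => hP i (Finset.mem_cons_of_mem hi))
        (hPd.subset (by simp))))
      (hA.isCompact hE) (hEA.isCompact hE) disjoint_sdiff_right ?_
    exact disjoint_iUnion₂_right.2 fun i hi => hPd (by simp) (by simp [hi])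
      (ne_of_mem_of_not_mem hi ha).symm

end SelfSimilar

theorem disjoint_bilip_copies_bilip_self_general
    {X Y : Type*} [MetricSpace X] [MetricSpace Y]
    (E : Set X) (hEne : E.Nonempty) (hEc : IsCompact E)
    (N : ℕ) (hN : 2 ≤ N) (T : Fin N → X → X) (c : Fin N → ℝ)
    (hc : ∀ i, c i ∈ Set.Ioo (0 : ℝ) 1)
    (hsim : ∀ i x y, dist (T i x) (T i y) = c i * dist x y)
    (hunion : E = ⋃ i, T i '' E)
    (hdisj : ∀ i j : Fin N, i ≠ j → Disjoint (T i '' E) (T j '' E))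
    (n : ℕ) (hn : 1 ≤ n) (f : Fin n → X → Y)
    (hf : ∀ i, ∃ C : ℝ, 1 ≤ C ∧ ∀ x ∈ E, ∀ y ∈ E,
      C⁻¹ * dist x y ≤ dist (f i x) (f i y) ∧ dist (f i x) (f i y) ≤ C * dist x y)
    (hfd : ∀ i j : Fin n, i ≠ j → Disjoint (f i '' E) (f j '' E))
    (K : Set Y) (hK : K = ⋃ i, f i '' E) :
    BilipEquivSets K E := by
  have : Nonempty X := hEne.to_type
  let a : Fin N := ⟨0, by omega⟩
  have hab : a ≠ ⟨1, by omega⟩ := by simp [a, Fin.ext_iff]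
  have hA : BilipOn E (T a '' E) := (bilipOnWith_inv_of_dist_eq (hsim a) (hc a).1
    (hc a).2.le E).bilipOn_image (one_le_inv₀ (hc a).1 |>.2 (hc a).2.le)
  have hEA := bilipOn_sdiff_image_of_dustLike hEc hc hsim hunion hdisj hab
  have hEK : BilipOn E (⋃ i ∈ Finset.univ, f i '' E) :=
    hA.biUnion_of_sdiff hEc ((subset_iUnion (fun i => T i '' E) a).trans hunion.ge) hEA
      ⟨⟨0, hn⟩, Finset.mem_univ _⟩
      (fun i _ => let ⟨C, hC, hb⟩ := hf i; BilipOnWith.bilipOn_image hb hC)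
      fun i _ j _ hij => hfd i j hij
  rw [hK]
  simpa using hEK.symm.bilipEquivSets

/-- **Lemma (Cooper–Pignataro).** Suppose `E` is a dust-like self-similar set in
a compact metric space: `E` is nonempty compact and `E = ⋃_{i=1}^N T_i(E)` is a
pairwise disjoint union for contracting similitudes `T_i` (`N ≥ 2`). If
`K = ⋃_{i=1}^n f_i(E)` is a pairwise disjoint union with each `f_i` a
bilipschitz bijection onto its image (`n ≥ 1`), then `K` and `E` are
bilipschitz equivalent. -/
theorem disjoint_bilip_copies_bilip_self
    {X Y : Type*} [MetricSpace X] [CompactSpace X] [MetricSpace Y]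
    (E : Set X) (hEne : E.Nonempty) (hEc : IsCompact E)
    (N : ℕ) (hN : 2 ≤ N) (T : Fin N → X → X) (c : Fin N → ℝ)
    (hc : ∀ i, c i ∈ Set.Ioo (0 : ℝ) 1)
    (hsim : ∀ i x y, dist (T i x) (T i y) = c i * dist x y)
    (hunion : E = ⋃ i, T i '' E)
    (hdisj : ∀ i j : Fin N, i ≠ j → Disjoint (T i '' E) (T j '' E))
    (n : ℕ) (hn : 1 ≤ n) (f : Fin n → X → Y)
    (hf : ∀ i, ∃ C : ℝ, 1 ≤ C ∧ ∀ x ∈ E, ∀ y ∈ E,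
      C⁻¹ * dist x y ≤ dist (f i x) (f i y) ∧ dist (f i x) (f i y) ≤ C * dist x y)
    (hfd : ∀ i j : Fin n, i ≠ j → Disjoint (f i '' E) (f j '' E))
    (K : Set Y) (hK : K = ⋃ i, f i '' E) :
    BilipEquivSets K E :=
  disjoint_bilip_copies_bilip_self_general E hEne hEc N hN T c hc hsim hunion hdisj n hn f hf hfd K
    hK
end
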